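/- arXiv:1108.4812 — 7 statements merged into one kernel-verified Lean document; each statement's English description precedes it below -/
import Mathlib

section
/- Let (Ω, ℱ, ℙ) be a probability space, θ > 0 and b > 0. Let V : Ω → (0, ∞] be a random variable and let E be an exponential random variable with rate θ, independent of V. For y ≥ 0 define ψ(y) := y − b·𝔼[1 − e^{−y V}], with the convention e^{−y·∞} = 0 (that is, 𝔼[1 − e^{−y V}] := ℙ(V = ∞) + 𝔼[𝟙_{V<∞}(1 − e^{−y V})]), and define ψ_θ(x) := x − b·𝔼[1 − e^{−x (min(V,E))}] (note min(V,E) is finite almost surely). Then for every x ≥ 0, ψ_θ(x) = x ψ(x + θ)/(x + θ). -/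
open MeasureTheory ProbabilityTheory
open scoped ENNReal

open Set Filter

/-!
For `c > 0` and a random variable `m` with values in `[0, ∞]`, writing `1 - e^{-c m}` as the
probability that an independent `Exp(c)` variable `T` is below `m` and applying Tonelli gives
`𝔼[1 - e^{-c m}] = ∫ ℙ(m > t) dExp(c)(t)`. For `m = min(V, E)` the tail factorises as
`ℙ(V > t) e^{-θ t}`, and `x e^{-x t} e^{-θ t} = (x / (x + θ)) (x + θ) e^{-(x + θ) t}`, so
`𝔼[1 - e^{-x min(V, E)}] = x / (x + θ) · 𝔼[1 - e^{-(x + θ) V}]`; the identity for `ψ_θ` is then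
algebra.
-/

noncomputable def oneSubExpNeg (c : ℝ) (v : ℝ≥0∞) : ℝ :=
  if v = ∞ then 1 else 1 - Real.exp (-c * v.toReal)

lemma ae_nonneg_expMeasure (r : ℝ) : ∀ᵐ t ∂expMeasure r, 0 ≤ t := by
  rw [ae_iff]
  simp only [not_le]
  change volume.withDensity (exponentialPDF r) (Iio 0) = 0
  rw [withDensity_apply _ measurableSet_Iio]
  exact lintegral_exponentialPDF_of_nonpos le_rfl

lemma expMeasure_real_setOf_ofReal_lt {c : ℝ} (hc : 0 < c) (v : ℝ≥0∞) :
    (expMeasure c).real {t | ENNReal.ofReal t < v} = oneSubExpNeg c v := by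
  have := isProbabilityMeasure_expMeasure hc
  rcases eq_or_ne v ∞ with rfl | hv
  · simp [oneSubExpNeg]
  have hnoatom : ∀ᵐ t ∂expMeasure c, t ≠ v.toReal := by
    rw [ae_iff]
    simp only [not_not, ofPred_eq_eq_singleton]
    exact withDensity_absolutelyContinuous _ _ (measure_singleton v.toReal)
  have hset : {t | ENNReal.ofReal t < v} =ᵐ[expMeasure c] Iic v.toReal := by
    refine eventuallyEq_set.mpr ?_
    filter_upwards [ae_nonneg_expMeasure c, hnoatom] with t ht0 hty
    change ENNReal.ofReal t < v ↔ t ≤ v.toReal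
    rw [ENNReal.ofReal_lt_iff_lt_toReal ht0 hv, lt_iff_le_and_ne, and_iff_left hty]
  rw [measureReal_congr hset, ← cdf_eq_real, cdf_expMeasure_eq hc, if_pos ENNReal.toReal_nonneg,
    oneSubExpNeg, if_neg hv, neg_mul]

lemma integral_oneSubExpNeg_eq_lintegral_tail {Ω : Type*} [MeasurableSpace Ω] (P : Measure Ω)
    [SFinite P] {c : ℝ} (hc : 0 < c) {m : Ω → ℝ≥0∞} (hm : Measurable m) :
    ∫ ω, oneSubExpNeg c (m ω) ∂P = (∫⁻ t, P {ω | ENNReal.ofReal t < m ω} ∂expMeasure c).toReal := by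
  have := isProbabilityMeasure_expMeasure hc
  have hs : MeasurableSet {p : Ω × ℝ | ENNReal.ofReal p.2 < m p.1} :=
    measurableSet_lt (ENNReal.measurable_ofReal.comp measurable_snd) (hm.comp measurable_fst)
  simp_rw [← expMeasure_real_setOf_ofReal_lt hc, measureReal_def]
  refine (integral_toReal (measurable_measure_prodMk_left hs).aemeasurable
    (ae_of_all _ fun _ => measure_lt_top _ _)).trans (congrArg ENNReal.toReal ?_)
  exact (Measure.prod_apply hs).symm.trans (Measure.prod_apply_symm hs)

lemma exponentialPDF_mul_exp {r s : ℝ} (hr : 0 < r) (hrs : 0 < r + s) (t : ℝ) :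
    exponentialPDF r t * ENNReal.ofReal (Real.exp (-s * t))
      = ENNReal.ofReal (r / (r + s)) * exponentialPDF (r + s) t := by
  rcases lt_or_ge t 0 with ht | ht
  · simp [exponentialPDF_of_neg ht]
  rw [exponentialPDF_of_nonneg ht, exponentialPDF_of_nonneg ht,
    ← ENNReal.ofReal_mul (by positivity), ← ENNReal.ofReal_mul (by positivity)]
  congr 1
  rw [mul_assoc, ← Real.exp_add]
  field_simp
  ring_nf

lemma lintegral_mul_exp_expMeasure {r s : ℝ} (hr : 0 < r) (hrs : 0 < r + s) {f : ℝ → ℝ≥0∞}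
    (hf : Measurable f) :
    ∫⁻ t, f t * ENNReal.ofReal (Real.exp (-s * t)) ∂expMeasure r
      = ENNReal.ofReal (r / (r + s)) * ∫⁻ t, f t ∂expMeasure (r + s) := by
  have hpdf : ∀ q, Measurable (exponentialPDF q) := fun q =>
    ENNReal.measurable_ofReal.comp (measurable_exponentialPDFReal q)
  change ∫⁻ t, _ ∂volume.withDensity (exponentialPDF r)
    = _ * ∫⁻ t, _ ∂volume.withDensity (exponentialPDF (r + s))
  rw [lintegral_withDensity_eq_lintegral_mul _ (hpdf r) (by fun_prop),
    lintegral_withDensity_eq_lintegral_mul _ (hpdf (r + s)) hf,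
    ← lintegral_const_mul _ ((hpdf (r + s)).mul hf)]
  congr 1 with t
  simp only [Pi.mul_apply]
  rw [mul_left_comm, exponentialPDF_mul_exp hr hrs]
  ring

lemma measure_ofReal_lt_min_ofReal {Ω : Type*} [MeasurableSpace Ω] {P : Measure Ω}
    {V : Ω → ℝ≥0∞} {E : Ω → ℝ} (hindep : IndepFun V E P) {t : ℝ} (ht : 0 ≤ t) :
    P {ω | ENNReal.ofReal t < min (V ω) (ENNReal.ofReal (E ω))}
      = P {ω | ENNReal.ofReal t < V ω} * P {ω | t < E ω} := by
  have hset : {ω | ENNReal.ofReal t < min (V ω) (ENNReal.ofReal (E ω))}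
      = V ⁻¹' Ioi (ENNReal.ofReal t) ∩ E ⁻¹' Ioi t := by
    ext ω
    simp [ENNReal.ofReal_lt_ofReal_iff_of_nonneg ht]
  rw [hset, hindep.measure_inter_preimage_eq_mul _ _ measurableSet_Ioi measurableSet_Ioi]
  rfl

lemma integral_oneSubExpNeg_min_exponential {Ω : Type*} [MeasurableSpace Ω] {P : Measure Ω}
    [SFinite P] {θ x : ℝ} (hθ : 0 ≤ θ) (hx : 0 < x) {V : Ω → ℝ≥0∞} (hV : Measurable V)
    {E : Ω → ℝ} (hE : Measurable E)
    (hEexp : ∀ t : ℝ, 0 ≤ t → P {ω | t < E ω} = ENNReal.ofReal (Real.exp (-θ * t)))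
    (hindep : IndepFun V E P) :
    ∫ ω, oneSubExpNeg x (min (V ω) (ENNReal.ofReal (E ω))) ∂P
      = x / (x + θ) * ∫ ω, oneSubExpNeg (x + θ) (V ω) ∂P := by
  have hxθ : 0 < x + θ := by linarith
  have hVtail : Measurable fun t : ℝ => P {ω | ENNReal.ofReal t < V ω} :=
    Antitone.measurable fun s t hst =>
      measure_mono fun ω (h : _ < _) => (ENNReal.ofReal_le_ofReal hst).trans_lt h
  rw [integral_oneSubExpNeg_eq_lintegral_tail P hx (hV.min (by fun_prop)),
    integral_oneSubExpNeg_eq_lintegral_tail P hxθ hV,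
    ← ENNReal.toReal_ofReal (div_nonneg hx.le hxθ.le), ← ENNReal.toReal_mul,
    ← lintegral_mul_exp_expMeasure hx hxθ hVtail]
  congr 1
  refine lintegral_congr_ae ?_
  filter_upwards [ae_nonneg_expMeasure x] with t ht
  rw [measure_ofReal_lt_min_ofReal hindep ht, hEexp t ht]

theorem stmt_1_general {Ω : Type*} [MeasurableSpace Ω] (P : Measure Ω) [IsProbabilityMeasure P]
    (θ b : ℝ) (hθ : 0 < θ)
    (V : Ω → ℝ≥0∞) (hV : Measurable V)
    (E : Ω → ℝ) (hE : Measurable E)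
    (hEexp : ∀ t : ℝ, 0 ≤ t → P {ω | t < E ω} = ENNReal.ofReal (Real.exp (-θ * t)))
    (hindep : IndepFun V E P)
    (ψ : ℝ → ℝ)
    (hψ : ∀ y : ℝ, ψ y =
      y - b * ∫ ω, (if V ω = ∞ then 1 else 1 - Real.exp (-y * (V ω).toReal)) ∂P)
    (ψθ : ℝ → ℝ)
    (hψθ : ∀ x : ℝ, ψθ x =
      x - b * ∫ ω, (1 - Real.exp (-x * (min (V ω) (ENNReal.ofReal (E ω))).toReal)) ∂P) :
    ∀ x : ℝ, 0 ≤ x → ψθ x = x * ψ (x + θ) / (x + θ) := by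
  intro x hx
  rcases hx.eq_or_lt with rfl | hx
  · simp [hψθ]
  have hmin : ∀ ω, min (V ω) (ENNReal.ofReal (E ω)) ≠ ∞ := fun ω =>
    (min_le_right _ _).trans_lt ENNReal.ofReal_lt_top |>.ne
  have hψθ' : ψθ x = x - b * ∫ ω, oneSubExpNeg x (min (V ω) (ENNReal.ofReal (E ω))) ∂P := by
    simp only [hψθ, oneSubExpNeg, hmin, if_false]
  have hψ' : ψ (x + θ) = x + θ - b * ∫ ω, oneSubExpNeg (x + θ) (V ω) ∂P := hψ (x + θ)
  rw [hψθ', integral_oneSubExpNeg_min_exponential hθ.le hx hV hE hEexp hindep, hψ']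
  field_simp

/-- Equation (2.7): the Laplace exponent of the clonal splitting tree satisfies
`ψ_θ(x) = x ψ(x + θ)/(x + θ)`, where `V_θ = min(V, E)` with `E` exponential of rate `θ`
independent of the lifetime `V`. -/
theorem stmt_1 {Ω : Type*} [MeasurableSpace Ω] (P : Measure Ω) [IsProbabilityMeasure P]
    (θ b : ℝ) (hθ : 0 < θ) (hb : 0 < b)
    (V : Ω → ℝ≥0∞) (hV : Measurable V) (hVpos : ∀ ω, 0 < V ω)
    (E : Ω → ℝ) (hE : Measurable E) (hEnn : ∀ ω, 0 ≤ E ω)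
    (hEexp : ∀ t : ℝ, 0 ≤ t → P {ω | t < E ω} = ENNReal.ofReal (Real.exp (-θ * t)))
    (hindep : IndepFun V E P)
    (ψ : ℝ → ℝ)
    (hψ : ∀ y : ℝ, ψ y =
      y - b * ∫ ω, (if V ω = ∞ then 1 else 1 - Real.exp (-y * (V ω).toReal)) ∂P)
    (ψθ : ℝ → ℝ)
    (hψθ : ∀ x : ℝ, ψθ x =
      x - b * ∫ ω, (1 - Real.exp (-x * (min (V ω) (ENNReal.ofReal (E ω))).toReal)) ∂P) :
    ∀ x : ℝ, 0 ≤ x → ψθ x = x * ψ (x + θ) / (x + θ) :=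
  stmt_1_general P θ b hθ V hV E hE hEexp hindep ψ hψ ψθ hψθ
end

section
/- Let W : [0,∞) → [0,∞) be measurable and locally integrable, let α ≥ 0, θ > 0, and let ψ : (α,∞) → (0,∞) satisfy ∫₀^∞ e^{−x r} W(r) dr = 1/ψ(x) for every x > α. Define W_θ(x) := e^{−θ x} W(x) + θ ∫₀^x W(y) e^{−θ y} dy. Then for every x > 0 with x + θ > α, the integral ∫₀^∞ e^{−x r} W_θ(r) dr converges and equals (x + θ)/(x ψ(x + θ)). -/
/-!
Write `W_θ(r) = e^{-θr} W(r) + θ G(r)` with `G(r) = ∫₀^r W(y) e^{-θy} dy`. The first term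
contributes `∫ e^{-(x+θ)r} W(r) dr = 1/ψ(x+θ)`. For the second, Fubini on the triangle
`0 < y ≤ r` shows that the Laplace transform of a primitive `∫₀^r g` is `1/x` times that of `g`;
with `g(y) = W(y) e^{-θy}` this gives `θ/(x ψ(x+θ))`, and the two terms add up to
`(x+θ)/(x ψ(x+θ))`.
-/

open MeasureTheory Set Real

namespace LaplacePrimitive

variable {x : ℝ} {g : ℝ → ℝ}

noncomputable def kernel (x : ℝ) (g : ℝ → ℝ) : ℝ × ℝ → ℝ :=
  {p : ℝ × ℝ | 0 < p.2 ∧ p.2 ≤ p.1}.indicator fun p => exp (-x * p.1) * g p.2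

lemma measurable_kernel (hg : Measurable g) : Measurable (kernel x g) :=
  (((measurable_fst.const_mul (-x)).exp).mul (hg.comp measurable_snd)).indicator
    ((measurableSet_lt measurable_const measurable_snd).inter
      (measurableSet_le measurable_snd measurable_fst))

lemma norm_kernel (p : ℝ × ℝ) : ‖kernel x g p‖ = kernel x (fun y => |g y|) p := by
  simp only [kernel, norm_indicator_eq_indicator_norm, norm_mul, norm_eq_abs, abs_exp]

lemma kernel_apply_eq_indicator_Ioc (r y : ℝ) :
    kernel x g (r, y) = (Ioc 0 r).indicator (fun y => exp (-x * r) * g y) y := by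
  simp only [kernel, indicator_apply, mem_ofPred_eq, mem_Ioc]

lemma kernel_apply_eq_indicator_Ici {y : ℝ} (hy : 0 < y) (r : ℝ) :
    kernel x g (r, y) = (Ici y).indicator (fun r => exp (-x * r) * g y) r := by
  simp only [kernel, indicator_apply, mem_ofPred_eq, mem_Ici, hy, true_and]

lemma integrableOn_kernel_fst (hx : 0 < x) {y : ℝ} (hy : 0 < y) :
    IntegrableOn (fun r => kernel x g (r, y)) (Ioi 0) := by
  simp_rw [kernel_apply_eq_indicator_Ici hy]
  exact ((integrableOn_exp_mul_Ioi (neg_lt_zero.mpr hx) 0).mul_const _).indicator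
    measurableSet_Ici

lemma integral_kernel_fst (hx : 0 < x) {y : ℝ} (hy : 0 < y) :
    ∫ r in Ioi 0, kernel x g (r, y) = exp (-x * y) * g y / x := by
  simp_rw [kernel_apply_eq_indicator_Ici hy]
  rw [setIntegral_indicator measurableSet_Ici,
    inter_eq_right.mpr (Ici_subset_Ioi.mpr hy), integral_Ici_eq_integral_Ioi,
    integral_mul_const, integral_exp_mul_Ioi (neg_lt_zero.mpr hx)]
  field_simp

lemma integral_kernel_snd {r : ℝ} (hr : 0 < r) :
    ∫ y in Ioi 0, kernel x g (r, y) = exp (-x * r) * ∫ y in (0 : ℝ)..r, g y := by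
  simp_rw [kernel_apply_eq_indicator_Ioc r]
  rw [setIntegral_indicator measurableSet_Ioc, inter_eq_right.mpr Ioc_subset_Ioi_self,
    intervalIntegral.integral_of_le hr.le, integral_const_mul]

lemma integrable_kernel (hx : 0 < x) (hg : Measurable g)
    (hint : IntegrableOn (fun y => exp (-x * y) * g y) (Ioi 0)) :
    Integrable (kernel x g) ((volume.restrict (Ioi 0)).prod (volume.restrict (Ioi 0))) := by
  rw [integrable_prod_iff' (measurable_kernel hg).aestronglyMeasurable]
  refine ⟨(ae_restrict_mem measurableSet_Ioi).mono fun y hy => integrableOn_kernel_fst hx hy,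
    ?_⟩
  have hnorm : IntegrableOn (fun y => exp (-x * y) * |g y| / x) (Ioi 0) := by
    have := hint.norm.div_const x
    simp only [norm_mul, norm_eq_abs, abs_exp] at this
    exact this
  refine hnorm.congr ((ae_restrict_mem measurableSet_Ioi).mono fun y hy => ?_)
  simp only [norm_kernel]
  exact (integral_kernel_fst (g := fun y => |g y|) hx hy).symm

theorem integrableOn_and_integral (hx : 0 < x) (hg : Measurable g)
    (hint : IntegrableOn (fun y => exp (-x * y) * g y) (Ioi 0)) :
    IntegrableOn (fun r => exp (-x * r) * ∫ y in (0 : ℝ)..r, g y) (Ioi 0) ∧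
      ∫ r in Ioi 0, exp (-x * r) * ∫ y in (0 : ℝ)..r, g y =
        (∫ y in Ioi 0, exp (-x * y) * g y) / x := by
  have hK := integrable_kernel hx hg hint
  have hsnd : ∀ᵐ r ∂volume.restrict (Ioi 0),
      ∫ y in Ioi 0, kernel x g (r, y) = exp (-x * r) * ∫ y in (0 : ℝ)..r, g y :=
    (ae_restrict_mem measurableSet_Ioi).mono fun r hr => integral_kernel_snd hr
  have hfst : ∀ᵐ y ∂volume.restrict (Ioi 0),
      ∫ r in Ioi 0, kernel x g (r, y) = exp (-x * y) * g y / x :=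
    (ae_restrict_mem measurableSet_Ioi).mono fun y hy => integral_kernel_fst hx hy
  refine ⟨hK.integral_prod_left.congr hsnd, ?_⟩
  rw [← integral_congr_ae hsnd, ← integral_prod _ hK, integral_prod_symm _ hK,
    integral_congr_ae hfst, integral_div]

end LaplacePrimitive

theorem stmt_2_general (α θ : ℝ)
    (W : ℝ → ℝ) (hWmeas : Measurable W)
    (ψ : ℝ → ℝ)
    (hint : ∀ x : ℝ, α < x → IntegrableOn (fun r => Real.exp (-x * r) * W r) (Set.Ioi 0))
    (hLT : ∀ x : ℝ, α < x → ∫ r in Set.Ioi (0:ℝ), Real.exp (-x * r) * W r = 1 / ψ x)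
    (Wθ : ℝ → ℝ)
    (hWθ : ∀ x : ℝ, Wθ x =
      Real.exp (-θ * x) * W x + θ * ∫ y in (0:ℝ)..x, W y * Real.exp (-θ * y)) :
    ∀ x : ℝ, 0 < x → α < x + θ →
      IntegrableOn (fun r => Real.exp (-x * r) * Wθ r) (Set.Ioi 0) ∧
      ∫ r in Set.Ioi (0:ℝ), Real.exp (-x * r) * Wθ r = (x + θ) / (x * ψ (x + θ)) := by
  intro x hx hxθ
  have hexp : ∀ y, exp (-x * y) * (W y * exp (-θ * y)) = exp (-(x + θ) * y) * W y := fun y => by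
    rw [show -(x + θ) * y = -x * y + -θ * y by ring, exp_add]; ring
  have hsplit : ∀ r, exp (-x * r) * Wθ r = exp (-(x + θ) * r) * W r +
      θ * (exp (-x * r) * ∫ y in (0 : ℝ)..r, W y * exp (-θ * y)) := fun r => by
    rw [hWθ, mul_add, ← mul_assoc, ← hexp]; ring
  obtain ⟨hGint, hGval⟩ := LaplacePrimitive.integrableOn_and_integral
    (g := fun y => W y * exp (-θ * y)) hx (by fun_prop) (by simpa only [hexp] using hint _ hxθ)
  simp_rw [hsplit]
  refine ⟨(hint _ hxθ).add (hGint.const_mul θ), ?_⟩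
  rw [integral_add (hint _ hxθ) (hGint.const_mul θ), integral_const_mul, hGval]
  simp_rw [hexp]
  rw [hLT _ hxθ]
  field_simp

/-- `W_θ` (equation (2.6)) is the scale function of the clonal splitting tree:
its Laplace transform at `x` equals `(x+θ)/(x ψ(x+θ)) = 1/ψ_θ(x)`. -/
theorem stmt_2 (α θ : ℝ) (hα : 0 ≤ α) (hθ : 0 < θ)
    (W : ℝ → ℝ) (hWmeas : Measurable W) (hWnn : ∀ r : ℝ, 0 ≤ r → 0 ≤ W r)
    (hloc : ∀ x : ℝ, IntegrableOn W (Set.Icc 0 x))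
    (ψ : ℝ → ℝ) (hψpos : ∀ x : ℝ, α < x → 0 < ψ x)
    (hint : ∀ x : ℝ, α < x → IntegrableOn (fun r => Real.exp (-x * r) * W r) (Set.Ioi 0))
    (hLT : ∀ x : ℝ, α < x → ∫ r in Set.Ioi (0:ℝ), Real.exp (-x * r) * W r = 1 / ψ x)
    (Wθ : ℝ → ℝ)
    (hWθ : ∀ x : ℝ, Wθ x =
      Real.exp (-θ * x) * W x + θ * ∫ y in (0:ℝ)..x, W y * Real.exp (-θ * y)) :
    ∀ x : ℝ, 0 < x → α < x + θ →
      IntegrableOn (fun r => Real.exp (-x * r) * Wθ r) (Set.Ioi 0) ∧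
      ∫ r in Set.Ioi (0:ℝ), Real.exp (-x * r) * Wθ r = (x + θ) / (x * ψ (x + θ)) :=
  stmt_2_general α θ W hWmeas ψ hint hLT Wθ hWθ
end

section
/- Let 0 ≤ θ < α and let W : [0,∞) → [0,∞) be measurable and locally integrable with W(t)e^{−α t} → c ∈ (0,∞) as t → ∞. Define W_θ(x) := e^{−θ x} W(x) + θ ∫₀^x W(y) e^{−θ y} dy. Then W_θ(t) e^{−(α−θ) t} → c α/(α − θ) as t → ∞. -/
/-!
With `g(y) = W(y) e^{-θy}` and `β = α - θ` one has `g(t) e^{-βt} → c` and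
`W_θ(t) e^{-βt} = W(t) e^{-αt} + θ e^{-βt} ∫₀^t g`. Integrating `g - c e^{β·} = o(e^{β·})`
against the divergent integral `∫₀^t e^{βy} dy ~ e^{βt}/β` gives `e^{-βt} ∫₀^t g → c/β`,
so the limit is `c + θc/β = cα/(α-θ)`.
-/

open MeasureTheory Filter Asymptotics Topology

theorem isLittleO_intervalIntegral_of_isLittleO {f g : ℝ → ℝ} {a : ℝ}
    (hf : ∀ x, IntegrableOn f (Set.Icc a x)) (hg : ∀ x, IntegrableOn g (Set.Icc a x))
    (hg_nonneg : ∀ᶠ x in atTop, 0 ≤ g x)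
    (hG : Tendsto (fun x => ∫ y in a..x, g y) atTop atTop) (hfg : f =o[atTop] g) :
    (fun x => ∫ y in a..x, f y) =o[atTop] (fun x => ∫ y in a..x, g y) := by
  have intervalIntegrable {φ : ℝ → ℝ} (hφ : ∀ x, IntegrableOn φ (Set.Icc a x))
      {x y : ℝ} (hax : a ≤ x) (hxy : x ≤ y) : IntervalIntegrable φ volume x y :=
    ((hφ y).mono_set
      (Set.uIcc_subset_Icc ⟨hax, hxy⟩ ⟨hax.trans hxy, le_rfl⟩)).intervalIntegrable
  refine isLittleO_iff.2 fun ε hε => ?_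
  obtain ⟨T, hT⟩ := eventually_atTop.1 ((hfg.bound (half_pos hε)).and hg_nonneg)
  set T' := max T a
  have haT' : a ≤ T' := le_max_right T a
  have htail : ∀ x ≥ T', |∫ y in a..x, f y|
      ≤ |∫ y in a..T', f y| + ε / 2 * ((∫ y in a..x, g y) - ∫ y in a..T', g y) := by
    intro x hx
    have hfT : IntervalIntegrable f volume T' x := intervalIntegrable hf haT' hx
    have hbound : ∀ y ∈ Set.Icc T' x, |f y| ≤ ε / 2 * g y := fun y hy => by
      obtain ⟨hfy, hgy⟩ := hT y ((le_max_left T a).trans hy.1)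
      simpa [Real.norm_eq_abs, abs_of_nonneg hgy] using hfy
    calc |∫ y in a..x, f y| = |(∫ y in a..T', f y) + ∫ y in T'..x, f y| := by
          rw [intervalIntegral.integral_add_adjacent_intervals
            (intervalIntegrable hf le_rfl haT') hfT]
      _ ≤ |∫ y in a..T', f y| + ∫ y in T'..x, |f y| := by
          grw [abs_add_le, intervalIntegral.abs_integral_le_integral_abs hx]
      _ ≤ |∫ y in a..T', f y| + ∫ y in T'..x, ε / 2 * g y := by
          gcongr
          exact intervalIntegral.integral_mono_on hx hfT.abs
            ((intervalIntegrable hg haT' hx).const_mul _) hbound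
      _ = _ := by
          rw [intervalIntegral.integral_const_mul, intervalIntegral.integral_interval_sub_left
            (intervalIntegrable hg le_rfl (haT'.trans hx)) (intervalIntegrable hg le_rfl haT')]
  filter_upwards [eventually_ge_atTop T', hG.eventually_ge_atTop 0,
    (hG.const_mul_atTop (half_pos hε)).eventually_ge_atTop
      (|∫ y in a..T', f y| - ε / 2 * ∫ y in a..T', g y)] with x hx hGx hGε
  rw [Real.norm_eq_abs, Real.norm_eq_abs, abs_of_nonneg hGx]
  linarith [htail x hx]

theorem integral_exp_mul {β : ℝ} (hβ : β ≠ 0) (a b : ℝ) :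
    ∫ y in a..b, Real.exp (β * y) = (Real.exp (β * b) - Real.exp (β * a)) / β := by
  rw [intervalIntegral.integral_comp_mul_left (fun x => Real.exp x) hβ, integral_exp,
    div_eq_inv_mul, smul_eq_mul]

theorem tendsto_integral_exp_mul_atTop {β : ℝ} (hβ : 0 < β) :
    Tendsto (fun t => ∫ y in (0:ℝ)..t, Real.exp (β * y)) atTop atTop := by
  simp only [integral_exp_mul hβ.ne', mul_zero, Real.exp_zero]
  exact (tendsto_atTop_add_const_right _ (-1)
    (Real.tendsto_exp_atTop.comp (tendsto_id.const_mul_atTop hβ))).atTop_div_const hβ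

theorem tendsto_integral_exp_mul_mul_exp_neg {β : ℝ} (hβ : 0 < β) :
    Tendsto (fun t => (∫ y in (0:ℝ)..t, Real.exp (β * y)) * Real.exp (-β * t)) atTop
      (𝓝 (1 / β)) := by
  have hdecay : Tendsto (fun t => Real.exp (-β * t)) atTop (𝓝 0) :=
    Real.tendsto_exp_atBot.comp (tendsto_id.const_mul_atTop_of_neg (neg_neg_of_pos hβ))
  convert (hdecay.const_sub 1).div_const β using 1
  · ext t
    rw [integral_exp_mul hβ.ne', mul_zero, Real.exp_zero, div_mul_eq_mul_div, sub_mul,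
      ← Real.exp_add]
    simp
  · simp

theorem tendsto_intervalIntegral_mul_exp_neg {g : ℝ → ℝ} {β c : ℝ} (hβ : 0 < β)
    (hg : ∀ x, IntegrableOn g (Set.Icc 0 x))
    (hlim : Tendsto (fun t => g t * Real.exp (-β * t)) atTop (𝓝 c)) :
    Tendsto (fun t => (∫ y in (0:ℝ)..t, g y) * Real.exp (-β * t)) atTop (𝓝 (c / β)) := by
  set E : ℝ → ℝ := fun t => Real.exp (β * t)
  have hE_cont : Continuous E := by fun_prop
  have hE_ne : ∀ t, E t ≠ 0 := fun t => (Real.exp_pos _).ne'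
  have hdiv : ∀ t x, x / E t = x * Real.exp (-β * t) := fun t x => by
    rw [div_eq_mul_inv, ← Real.exp_neg, neg_mul]
  have hE_avg := tendsto_integral_exp_mul_mul_exp_neg hβ
  have hsmall : (fun t => g t - c * E t) =o[atTop] E := by
    rw [isLittleO_iff_tendsto fun t h => absurd h (hE_ne t)]
    refine (sub_self c ▸ hlim.sub_const c).congr fun t => ?_
    rw [sub_div, mul_div_cancel_right₀ _ (hE_ne t), hdiv]
  have hrem : (fun t => ∫ y in (0:ℝ)..t, (g y - c * E y)) =o[atTop] E :=
    (isLittleO_intervalIntegral_of_isLittleO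
      (fun x => (hg x).sub (hE_cont.integrableOn_Icc.const_mul c))
      (fun x => hE_cont.integrableOn_Icc) (Eventually.of_forall fun t => (Real.exp_pos _).le)
      (tendsto_integral_exp_mul_atTop hβ) hsmall).trans_isBigO
      (isBigO_of_div_tendsto_nhds (Eventually.of_forall fun t h => absurd h (hE_ne t)) _
        (hE_avg.congr fun t => (hdiv t _).symm))
  rw [show c / β = 0 + c * (1 / β) by ring]
  refine (hrem.tendsto_div_nhds_zero.add (hE_avg.const_mul c)).congr' ?_
  filter_upwards [eventually_ge_atTop 0] with t ht
  rw [hdiv, intervalIntegral.integral_sub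
    ((intervalIntegrable_iff_integrableOn_Icc_of_le ht).2 (hg t))
    ((hE_cont.intervalIntegrable 0 t).const_mul c), intervalIntegral.integral_const_mul]
  ring

theorem stmt_3_general (θ α c : ℝ) (hθα : θ < α)
    (W : ℝ → ℝ)
    (hloc : ∀ x : ℝ, IntegrableOn W (Set.Icc 0 x))
    (hlim : Tendsto (fun t => W t * Real.exp (-α * t)) atTop (nhds c)) :
    Tendsto (fun t =>
        (Real.exp (-θ * t) * W t + θ * ∫ y in (0:ℝ)..t, W y * Real.exp (-θ * y))
          * Real.exp (-(α - θ) * t))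
      atTop (nhds (c * α / (α - θ))) := by
  have hexp : ∀ t, Real.exp (-θ * t) * Real.exp (-(α - θ) * t) = Real.exp (-α * t) :=
    fun t => by rw [← Real.exp_add]; ring_nf
  have hWθ : Tendsto (fun t => W t * Real.exp (-θ * t) * Real.exp (-(α - θ) * t)) atTop
      (nhds c) :=
    hlim.congr fun t => by rw [mul_assoc, hexp]
  have hint := tendsto_intervalIntegral_mul_exp_neg (sub_pos.2 hθα)
    (fun x => (hloc x).mul_continuousOn (by fun_prop) isCompact_Icc) hWθ
  convert hWθ.add (hint.const_mul θ) using 2 with t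
  · ring
  · field_simp [(sub_pos.2 hθα).ne']
    ring

/-- Lemma 3.2 (i): if `W(t) e^{−αt} → c` and `0 ≤ θ < α`, then
`W_θ(t) e^{−(α−θ)t} → c α/(α−θ)`. -/
theorem stmt_3 (θ α c : ℝ) (hθ : 0 ≤ θ) (hθα : θ < α) (hc : 0 < c)
    (W : ℝ → ℝ) (hWmeas : Measurable W) (hWnn : ∀ r : ℝ, 0 ≤ r → 0 ≤ W r)
    (hloc : ∀ x : ℝ, IntegrableOn W (Set.Icc 0 x))
    (hlim : Tendsto (fun t => W t * Real.exp (-α * t)) atTop (nhds c)) :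
    Tendsto (fun t =>
        (Real.exp (-θ * t) * W t + θ * ∫ y in (0:ℝ)..t, W y * Real.exp (-θ * y))
          * Real.exp (-(α - θ) * t))
      atTop (nhds (c * α / (α - θ))) :=
  stmt_3_general θ α c hθα W hloc hlim
end

section
/- Let 0 < α < θ and let W : [0,∞) → [0,∞) be measurable and locally integrable with W(t)e^{−α t} → c ∈ (0,∞) as t → ∞. Define W_θ(x) := e^{−θ x} W(x) + θ ∫₀^x W(y) e^{−θ y} dy. Then m := θ ∫₀^∞ W(y) e^{−θ y} dy is finite, W_θ(t) → m as t → ∞, and e^{(θ−α) t}(m − W_θ(t)) → c α/(θ − α) as t → ∞. -/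
open MeasureTheory Filter Set Asymptotics Topology

/-!
Write `W y e^{-θy} = g(y) e^{-βy}` with `g(y) = W(y) e^{-αy} → c` and `β = θ - α > 0`. Then
`W e^{-θ·}` is integrable, and the tail `∫_t^∞ g(y) e^{-βy} dy` is `(c/β + o(1)) e^{-βt}`.
Since `m - W_θ(t) = θ ∫_t^∞ W(y) e^{-θy} dy - e^{-θt} W(t)`, multiplying by `e^{βt}` gives
`θ c/β - c + o(1) = cα/β + o(1)`.
-/

theorem locallyIntegrableOn_Ici_of_integrableOn_Icc {E : Type*} [NormedAddCommGroup E]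
    {f : ℝ → E} {a : ℝ} (hf : ∀ x, IntegrableOn f (Icc a x)) :
    LocallyIntegrableOn f (Ici a) := by
  rw [locallyIntegrableOn_iff isClosed_Ici.isLocallyClosed]
  intro k hk hkc
  obtain ⟨x, hx⟩ := hkc.bddAbove
  exact (hf x).mono_set fun y hy => ⟨hk hy, hx hy⟩

theorem isBigO_exp_of_tendsto_mul_exp_neg {W : ℝ → ℝ} {α c : ℝ}
    (hlim : Tendsto (fun t => W t * Real.exp (-α * t)) atTop (𝓝 c)) :
    W =O[atTop] fun t => Real.exp (α * t) := by
  refine ((hlim.isBigO_one ℝ).mul (isBigO_refl (fun t => Real.exp (α * t)) atTop)).congr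
    (fun t => ?_) fun t => one_mul _
  rw [mul_assoc, ← Real.exp_add, neg_mul, neg_add_cancel, Real.exp_zero, mul_one]

theorem integrableOn_Ioi_mul_exp_neg {W : ℝ → ℝ} {a α θ : ℝ} (hαθ : α < θ)
    (hloc : ∀ x, IntegrableOn W (Icc a x)) (hW : W =O[atTop] fun t => Real.exp (α * t)) :
    IntegrableOn (fun y => W y * Real.exp (-θ * y)) (Ioi a) := by
  have hlocexp : LocallyIntegrableOn (fun y => W y * Real.exp (-θ * y)) (Ici a) :=
    (locallyIntegrableOn_Ici_of_integrableOn_Icc hloc).mul_continuousOn (by fun_prop)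
      isClosed_Ici.isLocallyClosed
  have hO : (fun y => W y * Real.exp (-θ * y)) =O[atTop] fun y => Real.exp ((α - θ) * y) :=
    (hW.mul (isBigO_refl (fun y => Real.exp (-θ * y)) atTop)).congr_right fun y => by
      rw [← Real.exp_add]; ring_nf
  have hexp : IntegrableAtFilter (fun y => Real.exp ((α - θ) * y)) atTop :=
    ⟨Ioi a, Ioi_mem_atTop a, integrableOn_exp_mul_Ioi (sub_neg.2 hαθ) a⟩
  exact (hlocexp.integrableOn_of_isBigO_atTop hO hexp).mono_set Ioi_subset_Ici_self

section Tail

variable {β : ℝ}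

theorem norm_integral_Ioi_mul_exp_neg_le (hβ : 0 < β) {h : ℝ → ℝ} {ε t : ℝ}
    (hh : ∀ y ∈ Ioi t, ‖h y‖ ≤ ε) :
    ‖∫ y in Ioi t, h y * Real.exp (-β * y)‖ ≤ ε * Real.exp (-β * t) / β := by
  have hexp : ∫ y in Ioi t, Real.exp (-β * y) = Real.exp (-β * t) / β := by
    rw [integral_exp_mul_Ioi (neg_lt_zero.2 hβ), div_neg, neg_div, neg_neg]
  calc ‖∫ y in Ioi t, h y * Real.exp (-β * y)‖
      ≤ ∫ y in Ioi t, ε * Real.exp (-β * y) := by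
        refine norm_integral_le_of_norm_le
          ((integrableOn_exp_mul_Ioi (neg_lt_zero.2 hβ) t).const_mul ε) ?_
        filter_upwards [ae_restrict_mem measurableSet_Ioi] with y hy
        rw [norm_mul, Real.norm_of_nonneg (Real.exp_pos _).le]
        exact mul_le_mul_of_nonneg_right (hh y hy) (Real.exp_pos _).le
    _ = ε * Real.exp (-β * t) / β := by rw [integral_const_mul, hexp, mul_div_assoc]

theorem tendsto_exp_mul_integral_Ioi_mul_exp_neg_zero (hβ : 0 < β) {g : ℝ → ℝ}
    (hg : Tendsto g atTop (𝓝 0)) :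
    Tendsto (fun t => Real.exp (β * t) * ∫ y in Ioi t, g y * Real.exp (-β * y)) atTop
      (𝓝 0) := by
  rw [Metric.tendsto_nhds]
  intro ε hε
  have hsmall : ∀ᶠ t in atTop, ∀ y, t ≤ y → ‖g y‖ ≤ ε * β / 2 :=
    eventually_forall_ge_atTop.2 <|
      hg.norm.eventually (ge_mem_nhds (by rw [norm_zero]; positivity))
  filter_upwards [hsmall] with t ht
  have hbound := norm_integral_Ioi_mul_exp_neg_le hβ fun y hy => ht y (le_of_lt hy)
  rw [dist_zero_right, norm_mul, Real.norm_of_nonneg (Real.exp_pos _).le]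
  calc Real.exp (β * t) * ‖∫ y in Ioi t, g y * Real.exp (-β * y)‖
      ≤ Real.exp (β * t) * (ε * β / 2 * Real.exp (-β * t) / β) := by gcongr
    _ = ε / 2 := by rw [neg_mul, Real.exp_neg]; field_simp
    _ < ε := half_lt_self hε

theorem tendsto_exp_mul_integral_Ioi_mul_exp_neg (hβ : 0 < β) {g : ℝ → ℝ} {a c : ℝ}
    (hg : Tendsto g atTop (𝓝 c))
    (hint : IntegrableOn (fun y => g y * Real.exp (-β * y)) (Ioi a)) :
    Tendsto (fun t => Real.exp (β * t) * ∫ y in Ioi t, g y * Real.exp (-β * y)) atTop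
      (𝓝 (c / β)) := by
  have hrem := tendsto_exp_mul_integral_Ioi_mul_exp_neg_zero hβ (tendsto_sub_nhds_zero_iff.2 hg)
  rw [← add_zero (c / β)]
  refine (hrem.const_add (c / β)).congr' ?_
  filter_upwards [eventually_ge_atTop a] with t ht
  have hexp : IntegrableOn (fun y => c * Real.exp (-β * y)) (Ioi t) :=
    (integrableOn_exp_mul_Ioi (neg_lt_zero.2 hβ) t).const_mul c
  simp_rw [sub_mul]
  rw [integral_sub (hint.mono_set (Ioi_subset_Ioi ht)) hexp, integral_const_mul,
    integral_exp_mul_Ioi (neg_lt_zero.2 hβ), neg_mul, Real.exp_neg]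
  field_simp
  ring

end Tail

theorem stmt_4_general (α θ c : ℝ) (hαθ : α < θ)
    (W : ℝ → ℝ)
    (hloc : ∀ x : ℝ, IntegrableOn W (Set.Icc 0 x))
    (hlim : Tendsto (fun t => W t * Real.exp (-α * t)) atTop (nhds c)) :
    IntegrableOn (fun y => W y * Real.exp (-θ * y)) (Set.Ioi 0) ∧
    Tendsto (fun t =>
        Real.exp (-θ * t) * W t + θ * ∫ y in (0:ℝ)..t, W y * Real.exp (-θ * y)) atTop
      (nhds (θ * ∫ y in Set.Ioi (0:ℝ), W y * Real.exp (-θ * y))) ∧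
    Tendsto (fun t => Real.exp ((θ - α) * t) *
        ((θ * ∫ y in Set.Ioi (0:ℝ), W y * Real.exp (-θ * y)) -
          (Real.exp (-θ * t) * W t + θ * ∫ y in (0:ℝ)..t, W y * Real.exp (-θ * y))))
      atTop (nhds (c * α / (θ - α))) := by
  have hβ : 0 < θ - α := sub_pos.2 hαθ
  have hfactor : ∀ y,
      W y * Real.exp (-θ * y) = W y * Real.exp (-α * y) * Real.exp (-(θ - α) * y) :=
    fun y => by rw [mul_assoc, ← Real.exp_add]; ring_nf
  have hint := integrableOn_Ioi_mul_exp_neg hαθ hloc (isBigO_exp_of_tendsto_mul_exp_neg hlim)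
  have htail := tendsto_exp_mul_integral_Ioi_mul_exp_neg hβ hlim (a := 0)
    (by simpa only [hfactor] using hint)
  simp only [← hfactor] at htail
  refine ⟨hint, ?_, ?_⟩
  · have hdecay : Tendsto (fun t => Real.exp (-(θ - α) * t)) atTop (𝓝 0) :=
      Real.tendsto_exp_atBot.comp <| tendsto_id.const_mul_atTop_of_neg (neg_lt_zero.2 hβ)
    have hboundary : Tendsto (fun t => Real.exp (-θ * t) * W t) atTop (𝓝 0) := by
      simpa only [mul_comm (Real.exp _), hfactor, mul_zero] using hlim.mul hdecay
    simpa using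
      hboundary.add ((intervalIntegral_tendsto_integral_Ioi 0 hint tendsto_id).const_mul θ)
  · have hlimit : θ * (c / (θ - α)) - c = c * α / (θ - α) := by field_simp; ring
    refine (hlimit ▸ (htail.const_mul θ).sub hlim).congr' ?_
    filter_upwards [eventually_ge_atTop 0] with t ht
    rw [← intervalIntegral.integral_interval_add_Ioi hint (hint.mono_set (Ioi_subset_Ioi ht))]
    have hexp : Real.exp ((θ - α) * t) * Real.exp (-θ * t) = Real.exp (-α * t) := by
      rw [← Real.exp_add]; ring_nf
    linear_combination W t * hexp

/-- Lemma 3.2 (ii), equation (3.2): for `0 < α < θ`, `W_θ(t) → m = θ∫₀^∞ W e^{−θ·}` and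
`e^{(θ−α)t}(m − W_θ(t)) → cα/(θ−α)`. -/
theorem stmt_4 (α θ c : ℝ) (hα : 0 < α) (hαθ : α < θ) (hc : 0 < c)
    (W : ℝ → ℝ) (hWmeas : Measurable W) (hWnn : ∀ r : ℝ, 0 ≤ r → 0 ≤ W r)
    (hloc : ∀ x : ℝ, IntegrableOn W (Set.Icc 0 x))
    (hlim : Tendsto (fun t => W t * Real.exp (-α * t)) atTop (nhds c)) :
    IntegrableOn (fun y => W y * Real.exp (-θ * y)) (Set.Ioi 0) ∧
    Tendsto (fun t =>
        Real.exp (-θ * t) * W t + θ * ∫ y in (0:ℝ)..t, W y * Real.exp (-θ * y)) atTop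
      (nhds (θ * ∫ y in Set.Ioi (0:ℝ), W y * Real.exp (-θ * y))) ∧
    Tendsto (fun t => Real.exp ((θ - α) * t) *
        ((θ * ∫ y in Set.Ioi (0:ℝ), W y * Real.exp (-θ * y)) -
          (Real.exp (-θ * t) * W t + θ * ∫ y in (0:ℝ)..t, W y * Real.exp (-θ * y))))
      atTop (nhds (c * α / (θ - α))) :=
  stmt_4_general α θ c hαθ W hloc hlim
end

section
/- Let 0 < α < θ and let W : [0,∞) → [1,∞) be nondecreasing with W(0) = 1 and W(t)e^{−α t} → c ∈ (0,∞) as t → ∞. Define W_θ(x) := e^{−θ x} W(x) + θ ∫₀^x W(y) e^{−θ y} dy, m := θ ∫₀^∞ W(y) e^{−θ y} dy, φ := 1 − 1/m, and ρ(t) := (1/φ)(1/W_θ(t) − 1/m). Then m ∈ (1, ∞), W_θ is nondecreasing with W_θ(0) = 1, 1 − 1/W_θ(t) = φ(1 − ρ(t)) for all t ≥ 0, ρ is nonincreasing, and e^{(θ−α) t} ρ(t) → c α/((θ−α) m² φ) as t → ∞. -/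
/-!
Write `W_θ(x) = 𝔼 W(x ∧ τ)` with `τ` exponential of rate `θ`: it is nondecreasing and bounded by
`m = 𝔼 W(τ)`, with gap `m - W_θ(t) = θ ∫_t^∞ W(y) e^{-θy} dy - e^{-θt} W(t)`. Since
`W(y) e^{-αy} → c`, the tail integral is `≈ c e^{-(θ-α)t}/(θ-α)`, so
`e^{(θ-α)t} (m - W_θ(t)) → cα/(θ-α)`. Then `ρ = (m - W_θ)/(φ m W_θ)` with `W_θ → m` gives the
asymptotics of `ρ`, and `m > 1` because `W` is unbounded.
-/

open MeasureTheory Filter Set Real Topology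

lemma integral_Ioi_exp_neg_mul {β : ℝ} (hβ : 0 < β) (t : ℝ) :
    ∫ y in Ioi t, exp (-β * y) = exp (-β * t) / β := by
  rw [integral_exp_mul_Ioi (neg_neg_of_pos hβ), neg_div_neg_eq]

lemma integrableOn_Ioi_exp_neg_mul {β : ℝ} (hβ : 0 < β) (t : ℝ) :
    IntegrableOn (fun y => exp (-β * y)) (Ioi t) :=
  integrableOn_exp_mul_Ioi (neg_neg_of_pos hβ) t

lemma integral_exp_neg_mul {β : ℝ} (hβ : 0 < β) {a b : ℝ} (hab : a ≤ b) :
    ∫ y in a..b, exp (-β * y) = (exp (-β * a) - exp (-β * b)) / β := by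
  rw [← intervalIntegral.integral_Ioi_sub_Ioi (integrableOn_Ioi_exp_neg_mul hβ a) hab,
    integral_Ioi_exp_neg_mul hβ, integral_Ioi_exp_neg_mul hβ, sub_div]

lemma exp_neg_mul_mul_exp_neg_sub_mul (α θ y : ℝ) :
    exp (-α * y) * exp (-(θ - α) * y) = exp (-θ * y) := by
  rw [← exp_add]; ring_nf

lemma exp_mul_mul_exp_neg_mul_div (β t x : ℝ) :
    exp (β * t) * (x * (exp (-β * t) / β)) = x / β := by
  rw [mul_left_comm, ← mul_div_assoc, ← exp_add, neg_mul, add_neg_cancel, exp_zero, mul_one_div]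

section Tail

variable {g : ℝ → ℝ} {β : ℝ}

lemma integrableOn_Ioi_mul_exp_neg_mul (hβ : 0 < β) {t C : ℝ}
    (hmeas : AEStronglyMeasurable g (volume.restrict (Ioi t))) (hC : ∀ y ∈ Ioi t, |g y| ≤ C) :
    IntegrableOn (fun y => g y * exp (-β * y)) (Ioi t) := by
  refine ((integrableOn_Ioi_exp_neg_mul hβ t).const_mul C).mono'
    (hmeas.mul (by fun_prop : Continuous fun y => exp (-β * y)).aestronglyMeasurable) ?_
  filter_upwards [ae_restrict_mem measurableSet_Ioi] with y hy
  rw [norm_mul, norm_of_nonneg (exp_pos _).le]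
  exact mul_le_mul_of_nonneg_right (hC y hy) (exp_pos _).le

lemma abs_exp_mul_integral_Ioi_sub_le (hβ : 0 < β) {t c ε : ℝ}
    (hmeas : AEStronglyMeasurable g (volume.restrict (Ioi t))) (hg : ∀ y ∈ Ioi t, |g y - c| ≤ ε) :
    |exp (β * t) * (∫ y in Ioi t, g y * exp (-β * y)) - c / β| ≤ ε / β := by
  have hexp := integrableOn_Ioi_exp_neg_mul hβ t
  have hint : IntegrableOn (fun y => g y * exp (-β * y)) (Ioi t) :=
    integrableOn_Ioi_mul_exp_neg_mul (C := |c| + ε) hβ hmeas fun y hy => by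
      linarith [abs_sub_abs_le_abs_sub (g y) c, hg y hy]
  have hdiff : (∫ y in Ioi t, g y * exp (-β * y)) - c * (exp (-β * t) / β)
      = ∫ y in Ioi t, (g y - c) * exp (-β * y) := by
    simp_rw [sub_mul]
    rw [integral_sub hint (hexp.const_mul c), integral_const_mul, integral_Ioi_exp_neg_mul hβ]
  have hbound : |∫ y in Ioi t, (g y - c) * exp (-β * y)| ≤ ε * (exp (-β * t) / β) := by
    rw [← integral_Ioi_exp_neg_mul hβ, ← integral_const_mul]
    refine (norm_eq_abs _).symm.trans_le <| norm_integral_le_of_norm_le (hexp.const_mul ε) ?_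
    filter_upwards [ae_restrict_mem measurableSet_Ioi] with y hy
    rw [norm_mul, norm_of_nonneg (exp_pos _).le]
    exact mul_le_mul_of_nonneg_right (hg y hy) (exp_pos _).le
  calc |exp (β * t) * (∫ y in Ioi t, g y * exp (-β * y)) - c / β|
      = exp (β * t) * |∫ y in Ioi t, (g y - c) * exp (-β * y)| := by
        rw [← exp_mul_mul_exp_neg_mul_div β t c, ← mul_sub, hdiff, abs_mul,
          abs_of_pos (exp_pos _)]
    _ ≤ exp (β * t) * (ε * (exp (-β * t) / β)) := by gcongr
    _ = ε / β := exp_mul_mul_exp_neg_mul_div β t ε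

variable {c a : ℝ}

lemma eventually_integrableOn_Ioi_mul_exp_neg_mul (hβ : 0 < β) (hg : Tendsto g atTop (𝓝 c))
    (hmeas : AEStronglyMeasurable g (volume.restrict (Ioi a))) :
    ∀ᶠ t in atTop, IntegrableOn (fun y => g y * exp (-β * y)) (Ioi t) := by
  have hclose : ∀ᶠ t in atTop, ∀ y, t ≤ y → |g y - c| ≤ 1 :=
    eventually_forall_ge_atTop.2 (hg.eventually (Metric.closedBall_mem_nhds c one_pos))
  filter_upwards [hclose, eventually_ge_atTop a] with t ht hta
  refine integrableOn_Ioi_mul_exp_neg_mul (C := |c| + 1) hβ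
    (hmeas.mono_set (Ioi_subset_Ioi hta)) fun y hy => ?_
  linarith [abs_sub_abs_le_abs_sub (g y) c, ht y hy.le]

theorem tendsto_exp_mul_integral_Ioi_mul_exp_neg_mul (hβ : 0 < β) (hg : Tendsto g atTop (𝓝 c))
    (hmeas : AEStronglyMeasurable g (volume.restrict (Ioi a))) :
    Tendsto (fun t => exp (β * t) * ∫ y in Ioi t, g y * exp (-β * y)) atTop (𝓝 (c / β)) := by
  refine Metric.tendsto_nhds.2 fun ε hε => ?_
  have hclose : ∀ᶠ t in atTop, ∀ y, t ≤ y → |g y - c| ≤ ε * β / 2 :=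
    eventually_forall_ge_atTop.2 (hg.eventually (Metric.closedBall_mem_nhds c (by positivity)))
  filter_upwards [hclose, eventually_ge_atTop a] with t ht hta
  calc _ ≤ ε * β / 2 / β := abs_exp_mul_integral_Ioi_sub_le hβ
        (hmeas.mono_set (Ioi_subset_Ioi hta)) fun y hy => ht y hy.le
    _ < ε := by field_simp; linarith

end Tail

lemma tendsto_atTop_of_tendsto_mul_exp_neg_mul {W : ℝ → ℝ} {α c : ℝ} (hα : 0 < α) (hc : 0 < c)
    (hlim : Tendsto (fun t => W t * exp (-α * t)) atTop (𝓝 c)) : Tendsto W atTop atTop := by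
  refine (hlim.pos_mul_atTop hc (tendsto_exp_atTop.comp (tendsto_id.const_mul_atTop hα))).congr
    fun t => ?_
  simp only [Function.comp_apply, id, mul_assoc, ← exp_add, neg_mul, neg_add_cancel, exp_zero,
    mul_one]

lemma tendsto_exp_mul_one_div_sub_one_div {u : ℝ → ℝ} {β m L : ℝ} (hβ : 0 < β) (hm : m ≠ 0)
    (hu : Tendsto (fun t => exp (β * t) * (m - u t)) atTop (𝓝 L)) :
    Tendsto (fun t => exp (β * t) * (1 / u t - 1 / m)) atTop (𝓝 (L / m ^ 2)) := by
  have hsub : Tendsto (fun t => m - u t) atTop (𝓝 0) := by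
    have := (tendsto_exp_atBot.comp
      (tendsto_id.const_mul_atTop_of_neg (neg_neg_of_pos hβ))).mul hu
    rw [zero_mul] at this
    refine this.congr fun t => ?_
    simp only [Function.comp_apply, id, ← mul_assoc, ← exp_add, neg_mul, neg_add_cancel, exp_zero,
      one_mul]
  have hlim : Tendsto u atTop (𝓝 m) := by
    simpa using (tendsto_const_nhds (x := m)).sub hsub
  have hne : ∀ᶠ t in atTop, u t ≠ 0 := hlim.eventually_ne hm
  have key := hu.div (hlim.mul_const m) (mul_ne_zero hm hm)
  rw [← sq] at key
  refine key.congr' ?_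
  filter_upwards [hne] with t ht
  simp only [Pi.div_apply]
  field_simp

/-- `W_θ(x) = 𝔼 W(x ∧ τ)` for an exponential time `τ` of rate `θ`. -/
noncomputable def expStoppedMean (θ : ℝ) (W : ℝ → ℝ) (x : ℝ) : ℝ :=
  exp (-θ * x) * W x + θ * ∫ y in (0 : ℝ)..x, W y * exp (-θ * y)

section ExpStoppedMean

variable {θ : ℝ} {W : ℝ → ℝ}

lemma expStoppedMean_zero : expStoppedMean θ W 0 = W 0 := by
  simp [expStoppedMean]

lemma intervalIntegrable_mul_exp_neg_mul {a b : ℝ} (hab : a ≤ b) (hW : MonotoneOn W (Icc a b)) :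
    IntervalIntegrable (fun y => W y * exp (-θ * y)) volume a b := by
  have hW' : MonotoneOn W (uIcc a b) := by rwa [uIcc_of_le hab]
  exact hW'.intervalIntegrable.mul_continuousOn (by fun_prop)

lemma aestronglyMeasurable_mul_exp_neg_mul (hW : MonotoneOn W (Ici 0)) (α : ℝ) :
    AEStronglyMeasurable (fun y => W y * exp (-α * y)) (volume.restrict (Ioi 0)) :=
  ((aemeasurable_restrict_of_monotoneOn measurableSet_Ioi (hW.mono Ioi_subset_Ici_self)).mul
    (by fun_prop)).aestronglyMeasurable

lemma mul_sub_exp_le_integral_mul_exp (hθ : 0 < θ) {a b : ℝ} (hab : a ≤ b)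
    (hW : MonotoneOn W (Icc a b)) :
    W a * (exp (-θ * a) - exp (-θ * b)) ≤ θ * ∫ y in a..b, W y * exp (-θ * y) := by
  have hmono : ∫ y in a..b, W a * exp (-θ * y) ≤ ∫ y in a..b, W y * exp (-θ * y) :=
    intervalIntegral.integral_mono_on hab (Continuous.intervalIntegrable (by fun_prop) a b)
      (intervalIntegrable_mul_exp_neg_mul hab hW)
      fun y hy => mul_le_mul_of_nonneg_right (hW (left_mem_Icc.2 hab) hy hy.1) (exp_pos _).le
  rw [intervalIntegral.integral_const_mul, integral_exp_neg_mul hθ hab] at hmono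
  calc W a * (exp (-θ * a) - exp (-θ * b))
      = θ * (W a * ((exp (-θ * a) - exp (-θ * b)) / θ)) := by field_simp
    _ ≤ θ * ∫ y in a..b, W y * exp (-θ * y) := by gcongr

lemma mul_exp_le_integral_Ioi_mul_exp (hθ : 0 < θ) {t : ℝ} (hW : MonotoneOn W (Ici t))
    (hint : IntegrableOn (fun y => W y * exp (-θ * y)) (Ioi t)) :
    W t * exp (-θ * t) ≤ θ * ∫ y in Ioi t, W y * exp (-θ * y) := by
  have hmono : ∫ y in Ioi t, W t * exp (-θ * y) ≤ ∫ y in Ioi t, W y * exp (-θ * y) :=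
    setIntegral_mono_on ((integrableOn_Ioi_exp_neg_mul hθ t).const_mul _) hint measurableSet_Ioi
      fun y hy => mul_le_mul_of_nonneg_right (hW self_mem_Ici (mem_Ici.2 hy.out.le) hy.out.le)
        (exp_pos _).le
  rw [integral_const_mul, integral_Ioi_exp_neg_mul hθ] at hmono
  calc W t * exp (-θ * t) = θ * (W t * (exp (-θ * t) / θ)) := by field_simp
    _ ≤ θ * ∫ y in Ioi t, W y * exp (-θ * y) := by gcongr

lemma exp_mul_sub_le_expStoppedMean_sub (hθ : 0 < θ) (hW : MonotoneOn W (Ici 0)) {x y : ℝ}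
    (hx : 0 ≤ x) (hxy : x ≤ y) :
    exp (-θ * y) * (W y - W x) ≤ expStoppedMean θ W y - expStoppedMean θ W x := by
  have hmid := mul_sub_exp_le_integral_mul_exp hθ hxy (hW.mono fun z hz => hx.trans hz.1)
  rw [expStoppedMean, expStoppedMean, ← intervalIntegral.integral_add_adjacent_intervals
    (intervalIntegrable_mul_exp_neg_mul hx (hW.mono Icc_subset_Ici_self))
    (intervalIntegrable_mul_exp_neg_mul hxy (hW.mono fun z hz => hx.trans hz.1))]
  linear_combination hmid

lemma monotoneOn_expStoppedMean (hθ : 0 < θ) (hW : MonotoneOn W (Ici 0)) :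
    MonotoneOn (expStoppedMean θ W) (Ici 0) := fun _ hx _ hy hxy =>
  sub_nonneg.1 <| (mul_nonneg (exp_pos _).le (sub_nonneg.2 (hW hx hy hxy))).trans
    (exp_mul_sub_le_expStoppedMean_sub hθ hW hx hxy)

lemma mul_integral_Ioi_sub_expStoppedMean
    (hint : IntegrableOn (fun y => W y * exp (-θ * y)) (Ioi 0)) {t : ℝ} (ht : 0 ≤ t) :
    θ * (∫ y in Ioi 0, W y * exp (-θ * y)) - expStoppedMean θ W t
      = θ * (∫ y in Ioi t, W y * exp (-θ * y)) - exp (-θ * t) * W t := by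
  rw [← intervalIntegral.integral_interval_add_Ioi hint (hint.mono_set (Ioi_subset_Ioi ht)),
    expStoppedMean]
  ring

lemma expStoppedMean_le_mul_integral_Ioi (hθ : 0 < θ) (hW : MonotoneOn W (Ici 0))
    (hint : IntegrableOn (fun y => W y * exp (-θ * y)) (Ioi 0)) {t : ℝ} (ht : 0 ≤ t) :
    expStoppedMean θ W t ≤ θ * ∫ y in Ioi 0, W y * exp (-θ * y) := by
  have htail := mul_exp_le_integral_Ioi_mul_exp hθ (hW.mono (Ici_subset_Ici.2 ht))
    (hint.mono_set (Ioi_subset_Ioi ht))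
  linarith [mul_integral_Ioi_sub_expStoppedMean hint ht]

lemma lt_mul_integral_Ioi_mul_exp (hθ : 0 < θ) (hW : MonotoneOn W (Ici 0))
    (hint : IntegrableOn (fun y => W y * exp (-θ * y)) (Ioi 0)) {t : ℝ} (ht : 0 ≤ t)
    (hWt : W 0 < W t) :
    W 0 < θ * ∫ y in Ioi 0, W y * exp (-θ * y) :=
  calc W 0 < W 0 + exp (-θ * t) * (W t - W 0) := by
        have := mul_pos (exp_pos (-θ * t)) (sub_pos.2 hWt); linarith
    _ ≤ expStoppedMean θ W t := by
        linarith [expStoppedMean_zero (θ := θ) (W := W),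
          exp_mul_sub_le_expStoppedMean_sub hθ hW le_rfl ht]
    _ ≤ θ * ∫ y in Ioi 0, W y * exp (-θ * y) :=
        expStoppedMean_le_mul_integral_Ioi hθ hW hint ht

variable {α c : ℝ}

lemma integrableOn_Ioi_mul_exp_neg_mul_of_tendsto (hαθ : α < θ) (hW : MonotoneOn W (Ici 0))
    (hlim : Tendsto (fun t => W t * exp (-α * t)) atTop (𝓝 c)) :
    IntegrableOn (fun y => W y * exp (-θ * y)) (Ioi 0) := by
  obtain ⟨T, hT, hT0⟩ := ((eventually_integrableOn_Ioi_mul_exp_neg_mul (sub_pos.2 hαθ) hlim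
    (aestronglyMeasurable_mul_exp_neg_mul hW α)).and (eventually_ge_atTop 0)).exists
  simp_rw [mul_assoc, exp_neg_mul_mul_exp_neg_sub_mul] at hT
  rw [← Ioc_union_Ioi_eq_Ioi hT0]
  exact ((intervalIntegrable_iff_integrableOn_Ioc_of_le hT0).1
    (intervalIntegrable_mul_exp_neg_mul hT0 (hW.mono Icc_subset_Ici_self))).union hT

theorem tendsto_exp_mul_mul_integral_Ioi_sub_expStoppedMean (hαθ : α < θ)
    (hW : MonotoneOn W (Ici 0)) (hlim : Tendsto (fun t => W t * exp (-α * t)) atTop (𝓝 c)) :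
    Tendsto (fun t => exp ((θ - α) * t) *
        (θ * (∫ y in Ioi 0, W y * exp (-θ * y)) - expStoppedMean θ W t))
      atTop (𝓝 (c * α / (θ - α))) := by
  have hβ : 0 < θ - α := sub_pos.2 hαθ
  have htail := tendsto_exp_mul_integral_Ioi_mul_exp_neg_mul hβ hlim
    (aestronglyMeasurable_mul_exp_neg_mul hW α)
  simp_rw [mul_assoc, exp_neg_mul_mul_exp_neg_sub_mul] at htail
  have hint := integrableOn_Ioi_mul_exp_neg_mul_of_tendsto hαθ hW hlim
  have hval : θ * (c / (θ - α)) - c = c * α / (θ - α) := by field_simp; ring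
  rw [← hval]
  refine ((htail.const_mul θ).sub hlim).congr' ?_
  filter_upwards [eventually_ge_atTop 0] with t ht
  have hexp : exp ((θ - α) * t) * exp (-θ * t) = exp (-α * t) := by rw [← exp_add]; ring_nf
  rw [mul_integral_Ioi_sub_expStoppedMean hint ht, ← hexp]
  ring

end ExpStoppedMean

theorem stmt_5_general (α θ c : ℝ) (hα : 0 < α) (hαθ : α < θ) (hc : 0 < c)
    (W : ℝ → ℝ) (hWmono : MonotoneOn W (Set.Ici 0)) (hW0 : W 0 = 1)
    (hlim : Tendsto (fun t => W t * Real.exp (-α * t)) atTop (nhds c))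
    (Wθ : ℝ → ℝ)
    (hWθ : ∀ x : ℝ, Wθ x =
      Real.exp (-θ * x) * W x + θ * ∫ y in (0:ℝ)..x, W y * Real.exp (-θ * y))
    (m φ : ℝ) (hm : m = θ * ∫ y in Set.Ioi (0:ℝ), W y * Real.exp (-θ * y))
    (hφ : φ = 1 - 1 / m)
    (ρ : ℝ → ℝ) (hρ : ∀ t : ℝ, ρ t = (1 / φ) * (1 / Wθ t - 1 / m)) :
    IntegrableOn (fun y => W y * Real.exp (-θ * y)) (Set.Ioi 0) ∧
    1 < m ∧
    MonotoneOn Wθ (Set.Ici 0) ∧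
    Wθ 0 = 1 ∧
    (∀ t : ℝ, 0 ≤ t → 1 - 1 / Wθ t = φ * (1 - ρ t)) ∧
    AntitoneOn ρ (Set.Ici 0) ∧
    Tendsto (fun t => Real.exp ((θ - α) * t) * ρ t) atTop
      (nhds (c * α / ((θ - α) * m ^ 2 * φ))) := by
  have hθ : 0 < θ := hα.trans hαθ
  obtain rfl : Wθ = expStoppedMean θ W := funext hWθ
  have hint := integrableOn_Ioi_mul_exp_neg_mul_of_tendsto hαθ hWmono hlim
  have hmono := monotoneOn_expStoppedMean hθ hWmono
  have hWθ0 : expStoppedMean θ W 0 = 1 := by rw [expStoppedMean_zero, hW0]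
  have hWθpos : ∀ t ∈ Ici (0 : ℝ), 0 < expStoppedMean θ W t := fun t ht =>
    one_pos.trans_le (hWθ0 ▸ hmono self_mem_Ici ht ht)
  have hm1 : 1 < m := by
    have hWtop := tendsto_atTop_of_tendsto_mul_exp_neg_mul hα hc hlim
    obtain ⟨t, hWt, ht⟩ := ((hWtop.eventually_gt_atTop 1).and (eventually_ge_atTop 0)).exists
    exact hm ▸ hW0 ▸ lt_mul_integral_Ioi_mul_exp hθ hWmono hint ht (hW0 ▸ hWt)
  have hφpos : 0 < φ := by rw [hφ, sub_pos, div_lt_one] <;> linarith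
  have hasymp := tendsto_exp_mul_one_div_sub_one_div (sub_pos.2 hαθ) (by positivity : m ≠ 0)
    (hm ▸ tendsto_exp_mul_mul_integral_Ioi_sub_expStoppedMean hαθ hWmono hlim)
  refine ⟨hint, hm1, hmono, hWθ0, fun t _ => ?_, fun s hs t ht hst => ?_, ?_⟩
  · rw [hρ, mul_sub, mul_one, ← mul_assoc, mul_one_div_cancel hφpos.ne', one_mul, hφ]
    ring
  · rw [hρ, hρ]
    gcongr
    exacts [hWθpos s hs, hmono hs ht hst]
  · convert hasymp.const_mul (1 / φ) using 1
    · simp only [hρ, mul_left_comm]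
    · field_simp

/-- Lemma 3.2 (ii): decomposition `1 − 1/W_θ(t) = φ(1 − ρ(t))` with `φ = 1 − 1/m`, and
asymptotics (3.3): `e^{(θ−α)t} ρ(t) → cα/((θ−α) m² φ)`. -/
theorem stmt_5 (α θ c : ℝ) (hα : 0 < α) (hαθ : α < θ) (hc : 0 < c)
    (W : ℝ → ℝ) (hWmono : MonotoneOn W (Set.Ici 0)) (hW0 : W 0 = 1)
    (hW1 : ∀ x : ℝ, 0 ≤ x → 1 ≤ W x)
    (hlim : Tendsto (fun t => W t * Real.exp (-α * t)) atTop (nhds c))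
    (Wθ : ℝ → ℝ)
    (hWθ : ∀ x : ℝ, Wθ x =
      Real.exp (-θ * x) * W x + θ * ∫ y in (0:ℝ)..x, W y * Real.exp (-θ * y))
    (m φ : ℝ) (hm : m = θ * ∫ y in Set.Ioi (0:ℝ), W y * Real.exp (-θ * y))
    (hφ : φ = 1 - 1 / m)
    (ρ : ℝ → ℝ) (hρ : ∀ t : ℝ, ρ t = (1 / φ) * (1 / Wθ t - 1 / m)) :
    IntegrableOn (fun y => W y * Real.exp (-θ * y)) (Set.Ioi 0) ∧
    1 < m ∧
    MonotoneOn Wθ (Set.Ici 0) ∧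
    Wθ 0 = 1 ∧
    (∀ t : ℝ, 0 ≤ t → 1 - 1 / Wθ t = φ * (1 - ρ t)) ∧
    AntitoneOn ρ (Set.Ici 0) ∧
    Tendsto (fun t => Real.exp ((θ - α) * t) * ρ t) atTop
      (nhds (c * α / ((θ - α) * m ^ 2 * φ))) :=
  stmt_5_general α θ c hα hαθ hc W hWmono hW0 hlim Wθ hWθ m φ hm hφ ρ hρ
end

section
/- Let 0 < α < θ, let W : [0,∞) → ℝ be nondecreasing with W(0) = 1 (so W ≥ 1) and W(t)e^{−α t} → c ∈ (0,∞) as t → ∞, define W_θ(x) := e^{−θ x} W(x) + θ ∫₀^x W(y) e^{−θ y} dy and m := θ ∫₀^∞ W(y) e^{−θ y} dy. Fix a ∈ ℝ and, for t large enough that α t/θ + a ≤ t, set E₁(t) := W(t)[θ ∫_{α t/θ + a}^{t} (e^{−θ x}/W_θ(x)) dx + e^{−θ t}/W_θ(t)]. Then lim_{t→∞} E₁(t) = (c/m) e^{−θ a}. Moreover, for any function t ↦ x_t with x_t → +∞ as t → ∞, with E₂(t) := W(t)[θ ∫_{α t/θ + a}^{t} (e^{−θ x}/W_θ(x))(1 −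 1/W_θ(x))^{⌈x_t⌉−1} dx + (e^{−θ t}/W_θ(t))(1 − 1/W_θ(t))^{⌈x_t⌉−1}], one has lim_{t→∞} E₂(t) = 0. -/
/-!
Because `W` is nondecreasing, the integral in `W_θ` grows at least as fast as the boundary term
`e^{-θx} W(x)` decays, so `W_θ` is nondecreasing from `W_θ(0) = 1` to its limit `m`. With
`s = αt/θ + a`, bounding `1/W_θ` on `[s, t]` between `1/W_θ(t)` and `1/W_θ(s)` squeezes `E₁(t)`
between expressions that both behave like `W(t) e^{-θs} / m = W(t) e^{-αt} e^{-θa} / m`, up to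
multiples of `W(t) e^{-θt} → 0` (as `α < θ`). In `E₂` the extra factor `(1 - 1/W_θ)^n` is at most
`(1 - 1/m)^n`, which tends to `0` as `n → ∞`.
-/

open MeasureTheory Filter Set Real Topology Asymptotics intervalIntegral

lemma integral_mul_exp_neg_mul (θ u v : ℝ) :
    ∫ y in u..v, θ * exp (-θ * y) = exp (-θ * u) - exp (-θ * v) := by
  have hderiv (y : ℝ) : HasDerivAt (fun y => -exp (-θ * y)) (θ * exp (-θ * y)) y :=
    (((hasDerivAt_id' y).const_mul (-θ)).exp).fun_neg.congr_deriv (by ring)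
  rw [integral_eq_sub_of_hasDerivAt (fun y _ => hderiv y)
    ((by fun_prop : Continuous fun y => θ * exp (-θ * y)).intervalIntegrable u v)]
  ring

section ExpWeightedIntegral

variable {θ u v : ℝ} {f : ℝ → ℝ}

lemma mul_sub_exp_le_integral_mul_exp_s8 {A : ℝ} (hθ : 0 ≤ θ) (huv : u ≤ v)
    (hf : IntervalIntegrable f volume u v) (hA : ∀ x ∈ Icc u v, A ≤ f x) :
    A * (exp (-θ * u) - exp (-θ * v)) ≤ θ * ∫ x in u..v, f x * exp (-θ * x) := by
  rw [← integral_mul_exp_neg_mul, ← intervalIntegral.integral_const_mul,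
    ← intervalIntegral.integral_const_mul]
  refine integral_mono_on huv
    ((by fun_prop : Continuous fun x => A * (θ * exp (-θ * x))).intervalIntegrable u v)
    ((hf.mul_continuousOn (by fun_prop)).const_mul θ) fun x hx => ?_
  nlinarith [hA x hx, mul_nonneg hθ (exp_pos (-θ * x)).le]

lemma integral_mul_exp_le_mul_sub_exp {B : ℝ} (hθ : 0 ≤ θ) (huv : u ≤ v)
    (hf : IntervalIntegrable f volume u v) (hB : ∀ x ∈ Icc u v, f x ≤ B) :
    θ * ∫ x in u..v, f x * exp (-θ * x) ≤ B * (exp (-θ * u) - exp (-θ * v)) := by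
  rw [← integral_mul_exp_neg_mul, ← intervalIntegral.integral_const_mul,
    ← intervalIntegral.integral_const_mul]
  refine integral_mono_on huv ((hf.mul_continuousOn (by fun_prop)).const_mul θ)
    ((by fun_prop : Continuous fun x => B * (θ * exp (-θ * x))).intervalIntegrable u v)
    fun x hx => ?_
  nlinarith [hB x hx, mul_nonneg hθ (exp_pos (-θ * x)).le]

end ExpWeightedIntegral

-- `W_θ` in the notation of the paper
noncomputable def thetaScale (θ : ℝ) (W : ℝ → ℝ) (x : ℝ) : ℝ :=
  exp (-θ * x) * W x + θ * ∫ y in (0 : ℝ)..x, W y * exp (-θ * y)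

section ThetaScale

variable {α θ c : ℝ} {W : ℝ → ℝ}

@[simp]
lemma thetaScale_zero : thetaScale θ W 0 = W 0 := by
  simp [thetaScale]

lemma MonotoneOn.intervalIntegrable_mul_exp (hW : MonotoneOn W (Ici 0)) {u v : ℝ}
    (hu : 0 ≤ u) (hv : 0 ≤ v) :
    IntervalIntegrable (fun y => W y * exp (-θ * y)) volume u v :=
  (hW.mono fun _ hz => le_trans (le_min hu hv) hz.1).intervalIntegrable.mul_continuousOn
    (by fun_prop)

lemma monotoneOn_thetaScale (hθ : 0 ≤ θ) (hW : MonotoneOn W (Ici 0)) :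
    MonotoneOn (thetaScale θ W) (Ici 0) := by
  intro x hx y hy hxy
  have hx' : (0 : ℝ) ≤ x := hx
  have hsplit := integral_add_adjacent_intervals (hW.intervalIntegrable_mul_exp (θ := θ) le_rfl hx)
    (hW.intervalIntegrable_mul_exp hx hy)
  have hgain := mul_sub_exp_le_integral_mul_exp_s8 (A := W x) hθ hxy
    (hW.mono fun _ hz => le_trans (le_min hx hy) hz.1).intervalIntegrable
    fun z hz => hW hx (hx'.trans hz.1) hz.1
  have hWxy := hW hx hy hxy
  simp only [thetaScale]
  rw [← hsplit]
  nlinarith [mul_nonneg (exp_pos (-θ * y)).le (sub_nonneg.2 hWxy)]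

lemma mul_exp_neg_mul_eq (w α θ y : ℝ) :
    w * exp (-α * y) * exp (-(θ - α) * y) = w * exp (-θ * y) := by
  rw [mul_assoc, ← exp_add]
  ring_nf

lemma tendsto_mul_exp_neg_mul_zero (hlim : Tendsto (fun t => W t * exp (-α * t)) atTop (𝓝 c))
    (hαθ : α < θ) : Tendsto (fun t => W t * exp (-θ * t)) atTop (𝓝 0) := by
  have hdecay : Tendsto (fun t => exp (-(θ - α) * t)) atTop (𝓝 0) :=
    tendsto_exp_atBot.comp (tendsto_id.const_mul_atTop_of_neg (by linarith))
  simpa only [mul_exp_neg_mul_eq, mul_zero] using hlim.mul hdecay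

lemma integrableOn_Ioi_mul_exp_neg_mul_s8 (hW : MonotoneOn W (Ici 0))
    (hlim : Tendsto (fun t => W t * exp (-α * t)) atTop (𝓝 c)) (hαθ : α < θ) :
    IntegrableOn (fun y => W y * exp (-θ * y)) (Ioi 0) := by
  have hbigO : (fun y => W y * exp (-θ * y)) =O[atTop] fun y => exp (-(θ - α) * y) := by
    have := (hlim.isBigO_one ℝ).mul (isBigO_refl (fun y => exp (-(θ - α) * y)) atTop)
    simpa only [mul_exp_neg_mul_eq, one_mul] using this
  refine (LocallyIntegrableOn.integrableOn_of_isBigO_atTop ?_ hbigO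
    ⟨Ioi 0, Ioi_mem_atTop 0, exp_neg_integrableOn_Ioi 0 (sub_pos.2 hαθ)⟩).mono_set
    Ioi_subset_Ici_self
  rw [locallyIntegrableOn_iff isClosed_Ici.isLocallyClosed]
  exact fun k hk hkc => ((hW.mono hk).integrableOn_isCompact hkc).mul_continuousOn
    (by fun_prop) hkc

lemma tendsto_thetaScale (hint : IntegrableOn (fun y => W y * exp (-θ * y)) (Ioi 0))
    (hdecay : Tendsto (fun x => W x * exp (-θ * x)) atTop (𝓝 0)) :
    Tendsto (thetaScale θ W) atTop (𝓝 (θ * ∫ y in Ioi 0, W y * exp (-θ * y))) := by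
  have := hdecay.add ((intervalIntegral_tendsto_integral_Ioi 0 hint tendsto_id).const_mul θ)
  rw [zero_add] at this
  exact this.congr fun x => by simp [thetaScale, mul_comm]

end ThetaScale

section Sandwich

variable {θ s t : ℝ} {V : ℝ → ℝ}

lemma MonotoneOn.intervalIntegrable_inv (hV : MonotoneOn V (Icc s t))
    (hV0 : ∀ x ∈ Icc s t, 0 < V x) (hst : s ≤ t) :
    IntervalIntegrable (fun x => (V x)⁻¹) volume s t := by
  refine AntitoneOn.intervalIntegrable ?_
  rw [uIcc_of_le hst]
  exact fun x hx y hy hxy => inv_anti₀ (hV0 x hx) (hV hx hy hxy)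

lemma div_le_integral_exp_neg_div (hθ : 0 ≤ θ) (hst : s ≤ t) (hV : MonotoneOn V (Icc s t))
    (hV0 : ∀ x ∈ Icc s t, 0 < V x) :
    (exp (-θ * s) - exp (-θ * t)) / V t ≤ θ * ∫ x in s..t, exp (-θ * x) / V x := by
  simp_rw [div_eq_inv_mul]
  exact mul_sub_exp_le_integral_mul_exp_s8 hθ hst (hV.intervalIntegrable_inv hV0 hst)
    fun x hx => inv_anti₀ (hV0 x hx) (hV hx (right_mem_Icc.2 hst) hx.2)

lemma integral_exp_neg_div_le_div (hθ : 0 ≤ θ) (hst : s ≤ t) (hV : MonotoneOn V (Icc s t))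
    (hV0 : ∀ x ∈ Icc s t, 0 < V x) :
    θ * ∫ x in s..t, exp (-θ * x) / V x ≤ (exp (-θ * s) - exp (-θ * t)) / V s := by
  simp_rw [div_eq_inv_mul]
  exact integral_mul_exp_le_mul_sub_exp hθ hst (hV.intervalIntegrable_inv hV0 hst)
    fun x hx => inv_anti₀ (hV0 s (left_mem_Icc.2 hst)) (hV (left_mem_Icc.2 hst) hx hx.1)

end Sandwich

lemma tendsto_mul_div_add_atTop {k θ a : ℝ} (hk : 0 < k) (hθ : 0 < θ) :
    Tendsto (fun t => k * t / θ + a) atTop atTop :=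
  tendsto_atTop_add_const_right _ a ((tendsto_id.const_mul_atTop hk).atTop_div_const hθ)

lemma eventually_mul_div_add_mem_Icc {α θ a : ℝ} (hα : 0 < α) (hαθ : α < θ) :
    ∀ᶠ t in atTop, α * t / θ + a ∈ Icc 0 t := by
  have hθ : 0 < θ := hα.trans hαθ
  filter_upwards [(tendsto_mul_div_add_atTop (a := a) hα hθ).eventually_ge_atTop 0,
    (tendsto_mul_div_add_atTop (a := -a) (sub_pos.2 hαθ) hθ).eventually_ge_atTop 0]
    with t hs hgap
  refine ⟨hs, ?_⟩
  have : (θ - α) * t / θ + -a = t - (α * t / θ + a) := by field_simp; ring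
  linarith

lemma tendsto_mul_integral_exp_neg_div {α θ a c m : ℝ} {W V : ℝ → ℝ} (hα : 0 < α)
    (hαθ : α < θ) (hlim : Tendsto (fun t => W t * exp (-α * t)) atTop (𝓝 c))
    (hW : 0 ≤ᶠ[atTop] W) (hV : MonotoneOn V (Ici 0)) (hV0 : ∀ x, 0 ≤ x → 0 < V x)
    (hVlim : Tendsto V atTop (𝓝 m)) (hm : m ≠ 0) :
    Tendsto (fun t => W t * ((θ * ∫ x in (α * t / θ + a)..t, exp (-θ * x) / V x)
      + exp (-θ * t) / V t)) atTop (𝓝 (c / m * exp (-θ * a))) := by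
  have hθ : 0 < θ := hα.trans hαθ
  have hWs : Tendsto (fun t => W t * exp (-θ * (α * t / θ + a))) atTop
      (𝓝 (c * exp (-θ * a))) :=
    (hlim.mul_const _).congr fun t => by rw [mul_assoc, ← exp_add]; congr 2; field_simp; ring
  have hWt := tendsto_mul_exp_neg_mul_zero hlim hαθ
  have hVs := hVlim.comp (tendsto_mul_div_add_atTop (a := a) hα hθ)
  have hlimit : c / m * exp (-θ * a) = c * exp (-θ * a) / m := by ring
  refine tendsto_of_tendsto_of_tendsto_of_le_of_le'
    (g := fun t => W t * exp (-θ * (α * t / θ + a)) / V t)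
    (h := fun t => W t * exp (-θ * (α * t / θ + a)) / V (α * t / θ + a)
      - W t * exp (-θ * t) / V (α * t / θ + a) + W t * exp (-θ * t) / V t) ?_ ?_ ?_ ?_
  · rw [hlimit]
    exact hWs.div hVlim hm
  · rw [hlimit]
    simpa using ((hWs.div hVs hm).sub (hWt.div hVs hm)).add (hWt.div hVlim hm)
  · filter_upwards [eventually_mul_div_add_mem_Icc (a := a) hα hαθ, hW] with t ⟨hs0, hst⟩ hWt0
    have := div_le_integral_exp_neg_div hθ.le hst (hV.mono fun x hx => hs0.trans hx.1)
      fun x hx => hV0 x (hs0.trans hx.1)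
    calc _ = W t * ((exp (-θ * (α * t / θ + a)) - exp (-θ * t)) / V t + exp (-θ * t) / V t) := by
          ring
      _ ≤ _ := by gcongr
  · filter_upwards [eventually_mul_div_add_mem_Icc (a := a) hα hαθ, hW] with t ⟨hs0, hst⟩ hWt0
    have := integral_exp_neg_div_le_div hθ.le hst (hV.mono fun x hx => hs0.trans hx.1)
      fun x hx => hV0 x (hs0.trans hx.1)
    calc _ ≤ W t * ((exp (-θ * (α * t / θ + a)) - exp (-θ * t)) / V (α * t / θ + a)
          + exp (-θ * t) / V t) := by gcongr
      _ = _ := by ring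

lemma tendsto_mul_integral_exp_neg_div_mul_pow {θ m L : ℝ} {W V s : ℝ → ℝ} {n : ℝ → ℕ}
    (hθ : 0 ≤ θ) (hV : MonotoneOn V (Ici 0)) (hV1 : ∀ x, 0 ≤ x → 1 ≤ V x)
    (hVm : ∀ x, 0 ≤ x → V x ≤ m) (hW : 0 ≤ᶠ[atTop] W) (hs : ∀ᶠ t in atTop, s t ∈ Icc 0 t)
    (hn : Tendsto n atTop atTop)
    (hE : Tendsto (fun t => W t * ((θ * ∫ x in s t..t, exp (-θ * x) / V x)
      + exp (-θ * t) / V t)) atTop (𝓝 L)) :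
    Tendsto (fun t => W t * ((θ * ∫ x in s t..t, exp (-θ * x) / V x * (1 - 1 / V x) ^ n t)
      + exp (-θ * t) / V t * (1 - 1 / V t) ^ n t)) atTop (𝓝 0) := by
  have hm : 1 ≤ m := (hV1 0 le_rfl).trans (hVm 0 le_rfl)
  have hq : Tendsto (fun t => (1 - 1 / m) ^ n t) atTop (𝓝 0) :=
    (tendsto_pow_atTop_nhds_zero_of_lt_one (by simpa using inv_le_one_of_one_le₀ hm)
      (by have := one_div_pos.2 (one_pos.trans_le hm); linarith)).comp hn
  have hfactor (x : ℝ) (hx : 0 ≤ x) : 0 ≤ 1 - 1 / V x ∧ 1 - 1 / V x ≤ 1 - 1 / m := by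
    have hVx := hV1 x hx
    constructor
    · simpa using inv_le_one_of_one_le₀ hVx
    · exact sub_le_sub_left (one_div_le_one_div_of_le (one_pos.trans_le hVx) (hVm x hx)) 1
  have hdensity (x : ℝ) (hx : 0 ≤ x) : 0 ≤ exp (-θ * x) / V x :=
    div_nonneg (exp_pos _).le (zero_le_one.trans (hV1 x hx))
  refine tendsto_of_tendsto_of_tendsto_of_le_of_le' tendsto_const_nhds
    (by simpa only [zero_mul] using hq.mul hE) ?_ ?_
  · filter_upwards [hs, hW] with t ⟨hs0, hst⟩ hWt
    have ht : 0 ≤ t := hs0.trans hst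
    refine mul_nonneg hWt (add_nonneg (mul_nonneg hθ (intervalIntegral.integral_nonneg hst
      fun x hx => ?_)) (mul_nonneg (hdensity t ht) (pow_nonneg (hfactor t ht).1 _)))
    exact mul_nonneg (hdensity x (hs0.trans hx.1)) (pow_nonneg (hfactor x (hs0.trans hx.1)).1 _)
  · filter_upwards [hs, hW] with t ⟨hs0, hst⟩ hWt
    have ht : 0 ≤ t := hs0.trans hst
    have hint : IntervalIntegrable (fun x => exp (-θ * x) / V x) volume (s t) t := by
      simp_rw [div_eq_inv_mul]
      exact ((hV.mono fun x hx => hs0.trans hx.1).intervalIntegrable_inv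
        (fun x hx => one_pos.trans_le (hV1 x (hs0.trans hx.1))) hst).mul_continuousOn
        (by fun_prop)
    have hbound : ∫ x in s t..t, exp (-θ * x) / V x * (1 - 1 / V x) ^ n t ≤
        (1 - 1 / m) ^ n t * ∫ x in s t..t, exp (-θ * x) / V x := by
      rw [← intervalIntegral.integral_const_mul, intervalIntegral.integral_of_le hst,
        intervalIntegral.integral_of_le hst]
      refine integral_mono_of_nonneg ?_ (hint.1.const_mul _) ?_ <;>
        filter_upwards [ae_restrict_mem measurableSet_Ioc] with x hx
      · have hx0 : 0 ≤ x := hs0.trans hx.1.le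
        exact mul_nonneg (hdensity x hx0) (pow_nonneg (hfactor x hx0).1 _)
      · have hx0 : 0 ≤ x := hs0.trans hx.1.le
        rw [mul_comm ((1 - 1 / m) ^ n t)]
        exact mul_le_mul_of_nonneg_left (pow_le_pow_left₀ (hfactor x hx0).1 (hfactor x hx0).2 _)
          (hdensity x hx0)
    have hlast : exp (-θ * t) / V t * (1 - 1 / V t) ^ n t ≤
        exp (-θ * t) / V t * (1 - 1 / m) ^ n t :=
      mul_le_mul_of_nonneg_left (pow_le_pow_left₀ (hfactor t ht).1 (hfactor t ht).2 _)
        (hdensity t ht)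
    calc _ ≤ W t * ((θ * ((1 - 1 / m) ^ n t * ∫ x in s t..t, exp (-θ * x) / V x))
          + exp (-θ * t) / V t * (1 - 1 / m) ^ n t) := by gcongr
      _ = _ := by ring

theorem stmt_8_general (α θ c a : ℝ) (hα : 0 < α) (hαθ : α < θ)
    (W : ℝ → ℝ) (hWmono : MonotoneOn W (Set.Ici 0)) (hW0 : W 0 = 1)
    (hlim : Tendsto (fun t => W t * Real.exp (-α * t)) atTop (nhds c))
    (Wθ : ℝ → ℝ)
    (hWθ : ∀ x : ℝ, Wθ x =
      Real.exp (-θ * x) * W x + θ * ∫ y in (0:ℝ)..x, W y * Real.exp (-θ * y))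
    (m : ℝ) (hm : m = θ * ∫ y in Set.Ioi (0:ℝ), W y * Real.exp (-θ * y)) :
    Tendsto (fun t => W t *
        ((θ * ∫ x in (α * t / θ + a)..t, Real.exp (-θ * x) / Wθ x)
          + Real.exp (-θ * t) / Wθ t)) atTop (nhds (c / m * Real.exp (-θ * a))) ∧
    ∀ x_ : ℝ → ℝ, Tendsto x_ atTop atTop →
      Tendsto (fun t => W t *
          ((θ * ∫ x in (α * t / θ + a)..t,
              (Real.exp (-θ * x) / Wθ x) * (1 - 1 / Wθ x) ^ (⌈x_ t⌉₊ - 1))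
            + (Real.exp (-θ * t) / Wθ t) * (1 - 1 / Wθ t) ^ (⌈x_ t⌉₊ - 1)))
        atTop (nhds 0) := by
  have hθ : 0 < θ := hα.trans hαθ
  obtain rfl : Wθ = thetaScale θ W := funext hWθ
  have hWθmono := monotoneOn_thetaScale hθ.le hWmono
  have hWθlim : Tendsto (thetaScale θ W) atTop (𝓝 m) := hm ▸ tendsto_thetaScale
    (integrableOn_Ioi_mul_exp_neg_mul_s8 hWmono hlim hαθ) (tendsto_mul_exp_neg_mul_zero hlim hαθ)
  have hWθ1 (x : ℝ) (hx : 0 ≤ x) : 1 ≤ thetaScale θ W x := by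
    simpa [hW0] using hWθmono self_mem_Ici hx hx
  have hWθm (x : ℝ) (hx : 0 ≤ x) : thetaScale θ W x ≤ m :=
    ge_of_tendsto hWθlim ((eventually_ge_atTop x).mono fun y hy => hWθmono hx (hx.trans hy) hy)
  have hW : 0 ≤ᶠ[atTop] W := (eventually_ge_atTop 0).mono fun x hx =>
    zero_le_one.trans (hW0 ▸ hWmono self_mem_Ici hx hx)
  have hE₁ := tendsto_mul_integral_exp_neg_div (a := a) hα hαθ hlim hW hWθmono
    (fun x hx => one_pos.trans_le (hWθ1 x hx))
    hWθlim (one_pos.trans_le ((hWθ1 0 le_rfl).trans (hWθm 0 le_rfl))).ne'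
  refine ⟨hE₁, fun x_ hx_ => ?_⟩
  exact tendsto_mul_integral_exp_neg_div_mul_pow hθ.le hWθmono hWθ1 hWθm hW
    (eventually_mul_div_add_mem_Icc hα hαθ)
    ((tendsto_sub_atTop_nat 1).comp (tendsto_nat_ceil_atTop.comp hx_)) hE₁

/-- Proposition 3.4 (subcritical clonal families, `α < θ`): expected number of haplotypes
older than `αt/θ + a` converges to `(c/m) e^{−θa}`, and the expected number of such
haplotypes carried by at least `x_t → ∞` individuals tends to `0`. -/
theorem stmt_8 (α θ c a : ℝ) (hα : 0 < α) (hαθ : α < θ) (hc : 0 < c)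
    (W : ℝ → ℝ) (hWmono : MonotoneOn W (Set.Ici 0)) (hW0 : W 0 = 1)
    (hlim : Tendsto (fun t => W t * Real.exp (-α * t)) atTop (nhds c))
    (Wθ : ℝ → ℝ)
    (hWθ : ∀ x : ℝ, Wθ x =
      Real.exp (-θ * x) * W x + θ * ∫ y in (0:ℝ)..x, W y * Real.exp (-θ * y))
    (m : ℝ) (hm : m = θ * ∫ y in Set.Ioi (0:ℝ), W y * Real.exp (-θ * y)) :
    Tendsto (fun t => W t *
        ((θ * ∫ x in (α * t / θ + a)..t, Real.exp (-θ * x) / Wθ x)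
          + Real.exp (-θ * t) / Wθ t)) atTop (nhds (c / m * Real.exp (-θ * a))) ∧
    ∀ x_ : ℝ → ℝ, Tendsto x_ atTop atTop →
      Tendsto (fun t => W t *
          ((θ * ∫ x in (α * t / θ + a)..t,
              (Real.exp (-θ * x) / Wθ x) * (1 - 1 / Wθ x) ^ (⌈x_ t⌉₊ - 1))
            + (Real.exp (-θ * t) / Wθ t) * (1 - 1 / Wθ t) ^ (⌈x_ t⌉₊ - 1)))
        atTop (nhds 0) :=
  stmt_8_general α θ c a hα hαθ W hWmono hW0 hlim Wθ hWθ m hm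
end

section
/- Let (Ω, ℱ, ℙ) be a probability space, q ∈ (0,1), N an ℕ-valued random variable with ℙ(N = k) = q(1−q)^{k−1} for every integer k ≥ 1, and (X_i)_{i≥1} an i.i.d. sequence of real-valued random variables such that N and the sequence (X_i)_{i≥1} are independent. Let n ≥ 1, let x₁ > x₂ > … > x_n be real numbers, let k₁, …, k_n ∈ ℕ with K := k₁ + ⋯ + k_n ≥ 1, and set F_j := ℙ(X₁ ≥ x_j) for 1 ≤ j ≤ n. Then, with the convention 0⁰ = 1, ℙ(#{1 ≤ i ≤ N : X_i ≥ x₁} = k₁ and #{1 ≤ i ≤ N : x_j ≤ X_i < x_{j−1}} = k_j for all 2 ≤ j ≤ n) = (q (1−q)^{K−1} / (q + F_n(1−q))^{K+1}) · (K!/(k₁!⋯k_n!)) · F₁^{k₁} · ∏_{j=2}^n (F_j − F_{j−1})^{k_j}. -/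
open MeasureTheory ProbabilityTheory
open scoped Classical

/-!
Conditionally on `N = m`, the numbers of `X₁, …, X_m` falling in the levels `[x₁, ∞)`,
`[x_j, x_{j-1})` and `(-∞, x_n)` are multinomial, because the `X_i` are i.i.d.; the event has
probability `(m choose K) · K!/∏ k_j! · F₁^{k₁} ∏ (F_j - F_{j-1})^{k_j} · (1 - F_n)^{m-K}`.
The multinomial law itself comes from Pascal's rule, by conditioning on the level of one more
variable. Averaging over the geometric law of `N`, which is independent of the `X_i`, leaves the
negative binomial series `∑_m (m choose K) ρ^{m-K} = (1 - ρ)^{-(K+1)}` with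
`ρ = (1 - q)(1 - F_n)`, and `1 - ρ = q + F_n (1 - q)`.
-/

open Finset Function
open scoped ENNReal

namespace Nat

variable {κ : Type*}

theorem cast_multinomial {K : Type*} [Semifield K] [CharZero K] (t : Finset κ) (c : κ → ℕ) :
    (multinomial t c : K) = (∑ i ∈ t, c i)! / ∏ i ∈ t, ((c i)! : K) := by
  rw [multinomial, cast_div (prod_factorial_dvd_factorial_sum t c)
    (cast_ne_zero.2 (prod_factorial_pos t c).ne'), cast_prod]

variable [DecidableEq κ] {t : Finset κ} {c : κ → ℕ}

theorem sum_mul_multinomial_update_pred {j : κ} (hj : j ∈ t) (hcj : c j ≠ 0) :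
    (∑ i ∈ t, c i) * multinomial t (update c j (c j - 1)) = c j * multinomial t c := by
  obtain ⟨a, ha⟩ := exists_eq_succ_of_ne_zero hcj
  have hagree : ∀ i ∈ t.erase j, update c j (c j - 1) i = c i :=
    fun i hi => update_of_ne (ne_of_mem_erase hi) _ _
  rw [← insert_erase hj, multinomial_insert (notMem_erase j t),
    multinomial_insert (notMem_erase j t), multinomial_congr hagree, sum_insert (notMem_erase j t),
    sum_congr rfl hagree, update_self, ha, ← mul_assoc, ← mul_assoc]
  congr 1
  simpa [add_right_comm, mul_comm] using add_one_mul_choose_eq (a + ∑ i ∈ t.erase j, c i) a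

theorem multinomial_eq_sum_multinomial_update_pred (h : ∑ i ∈ t, c i ≠ 0) :
    multinomial t c = ∑ j ∈ t with c j ≠ 0, multinomial t (update c j (c j - 1)) := by
  refine Nat.eq_of_mul_eq_mul_left (Nat.pos_of_ne_zero h) ?_
  rw [mul_sum, sum_congr rfl fun j hj => sum_mul_multinomial_update_pred
    (mem_filter.1 hj).1 (mem_filter.1 hj).2, ← sum_mul, sum_filter_ne_zero]

end Nat

namespace Finset

variable {κ M : Type*} [DecidableEq κ] {t : Finset κ} {c : κ → ℕ} {j₀ : κ}

theorem sum_update_pred_add_one (hj₀ : j₀ ∈ t) (hc : c j₀ ≠ 0) :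
    ∑ j ∈ t, update c j₀ (c j₀ - 1) j + 1 = ∑ j ∈ t, c j := by
  rw [sum_update_of_mem hj₀, ← sum_erase_add t c hj₀, sdiff_singleton_eq_erase]
  omega

theorem mul_prod_pow_update_pred [CommMonoid M] (p : κ → M) (hj₀ : j₀ ∈ t) (hc : c j₀ ≠ 0) :
    p j₀ * ∏ j ∈ t, p j ^ update c j₀ (c j₀ - 1) j = ∏ j ∈ t, p j ^ c j := by
  have hupd : (fun j => p j ^ update c j₀ (c j₀ - 1) j)
      = update (fun j => p j ^ c j) j₀ (p j₀ ^ (c j₀ - 1)) := by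
    ext j; rcases eq_or_ne j j₀ with rfl | hj <;> simp [*]
  rw [hupd, prod_update_of_mem hj₀, sdiff_singleton_eq_erase, ← mul_assoc, ← pow_succ',
    Nat.sub_add_cancel (Nat.one_le_iff_ne_zero.2 hc), mul_prod_erase t (fun j => p j ^ c j) hj₀]

end Finset

section countIn

variable {ι κ α : Type*}

noncomputable def countIn (s : Finset ι) (A : Set α) (f : ι → α) : ℕ := #{i ∈ s | f i ∈ A}

theorem countIn_empty (A : Set α) (f : ι → α) : countIn ∅ A f = 0 := by
  simp [countIn]

theorem countIn_cons {s : Finset ι} {i : ι} (hi : i ∉ s) (A : Set α) (f : ι → α) :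
    countIn (cons i s hi) A f = countIn s A f + if f i ∈ A then 1 else 0 := by
  simp only [countIn, filter_cons]
  split_ifs <;> simp only [card_cons, add_zero]

theorem countIn_univ_restrict (s : Finset ι) (A : Set α) (f : ι → α) :
    countIn univ A (s.restrict f) = countIn s A f := by
  simp only [countIn, card_filter]
  exact sum_coe_sort s fun i => if f i ∈ A then 1 else 0

theorem measurable_countIn [MeasurableSpace α] (s : Finset ι) {A : Set α} (hA : MeasurableSet A) :
    Measurable (countIn s A : (ι → α) → ℕ) := by
  unfold countIn
  simp only [card_filter]
  exact Finset.measurable_sum _ fun i _ =>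
    Measurable.ite (hA.preimage (measurable_pi_apply i)) measurable_const measurable_const

variable {S : κ → Set α} {t : Finset κ}

theorem measurableSet_countIn_eq [MeasurableSpace α] (hS : ∀ j, MeasurableSet (S j))
    (s : Finset ι) (c : κ → ℕ) : MeasurableSet {f : ι → α | ∀ j ∈ t, countIn s (S j) f = c j} := by
  simp only [Set.ofPred_forall]
  exact .biInter t.countable_toSet fun j _ =>
    measurable_countIn s (hS j) (measurableSet_singleton _)

theorem sum_countIn_eq_card (hdisj : (t : Set κ).PairwiseDisjoint S)
    (hcover : ∀ a, ∃ j ∈ t, a ∈ S j) (s : Finset ι) (f : ι → α) :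
    ∑ j ∈ t, countIn s (S j) f = #s := by
  unfold countIn
  rw [← card_biUnion]
  · congr 1
    ext i
    simp only [mem_biUnion, mem_filter]
    obtain ⟨j, hj, hi⟩ := hcover (f i)
    exact ⟨fun ⟨_, _, hi, _⟩ => hi, fun hi' => ⟨j, hj, hi', hi⟩⟩
  · intro j hj j' hj' hne
    simp only [onFun, disjoint_left, mem_filter]
    exact fun _ h h' => Set.disjoint_left.1 (hdisj hj hj' hne) h.2 h'.2

theorem countIn_cons_eq_iff [DecidableEq κ] (hdisj : (t : Set κ).PairwiseDisjoint S)
    {s : Finset ι} {i : ι} (hi : i ∉ s) {f : ι → α} {j₀ : κ} (hj₀ : j₀ ∈ t) (hf : f i ∈ S j₀)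
    (c : κ → ℕ) :
    (∀ j ∈ t, countIn (cons i s hi) (S j) f = c j) ↔
      c j₀ ≠ 0 ∧ ∀ j ∈ t, countIn s (S j) f = update c j₀ (c j₀ - 1) j := by
  have hmem : ∀ j ∈ t, j ≠ j₀ → f i ∉ S j := fun j hj hne h =>
    Set.disjoint_left.1 (hdisj hj hj₀ hne) h hf
  simp only [countIn_cons]
  constructor
  · intro h
    refine ⟨by have := h j₀ hj₀; simp only [if_pos hf] at this; omega, fun j hj => ?_⟩
    have := h j hj
    rcases eq_or_ne j j₀ with rfl | hne
    · rw [if_pos hf] at this; rw [update_self]; omega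
    · rw [if_neg (hmem j hj hne)] at this; rw [update_of_ne hne]; omega
  · rintro ⟨hc, h⟩ j hj
    have := h j hj
    rcases eq_or_ne j j₀ with rfl | hne
    · rw [if_pos hf]; rw [update_self] at this; omega
    · rw [if_neg (hmem j hj hne)]; rw [update_of_ne hne] at this; omega

end countIn

section MultinomialLaw

variable {Ω ι κ α : Type*} [MeasurableSpace Ω] [MeasurableSpace α] {P : Measure Ω}
  {X : ι → Ω → α} {S : κ → Set α} {t : Finset κ}

theorem measure_countIn_cons_eq_sum [DecidableEq κ] (hX : ∀ i, Measurable (X i))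
    (hXindep : iIndepFun X P) (hS : ∀ j, MeasurableSet (S j))
    (hdisj : (t : Set κ).PairwiseDisjoint S) (hcover : ∀ a, ∃ j ∈ t, a ∈ S j)
    {s : Finset ι} {i : ι} (hi : i ∉ s) (c : κ → ℕ) :
    P {ω | ∀ j ∈ t, countIn (cons i s hi) (S j) (X · ω) = c j}
      = ∑ j₀ ∈ t with c j₀ ≠ 0, P (X i ⁻¹' S j₀)
          * P {ω | ∀ j ∈ t, countIn s (S j) (X · ω) = update c j₀ (c j₀ - 1) j} := by
  set E : (κ → ℕ) → Set Ω := fun d => {ω | ∀ j ∈ t, countIn s (S j) (X · ω) = d j}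
  -- counts over `s` depend only on `(X i')_{i' ∈ s}`, which is independent of `X i`
  have hE : ∀ d, E d = (fun ω (i' : s) => X i' ω) ⁻¹'
      {g | ∀ j ∈ t, countIn univ (S j) g = d j} := fun d => by
    ext ω
    simp only [E, Set.mem_ofPred_eq, Set.mem_preimage, ← countIn_univ_restrict s]
    rfl
  have hindep : IndepFun (fun ω (i' : ({i} : Finset ι)) => X i' ω) (fun ω (i' : s) => X i' ω) P :=
    hXindep.indepFun_finset {i} s (disjoint_singleton_left.2 hi) hX
  have hdecomp : {ω | ∀ j ∈ t, countIn (cons i s hi) (S j) (X · ω) = c j}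
      = ⋃ j₀ ∈ {j ∈ t | c j ≠ 0}, X i ⁻¹' S j₀ ∩ E (update c j₀ (c j₀ - 1)) := by
    ext ω
    obtain ⟨j₀, hj₀, hω⟩ := hcover (X i ω)
    simp only [Set.mem_ofPred_eq, countIn_cons_eq_iff hdisj hi (f := (X · ω)) hj₀ hω,
      Set.mem_iUnion, Set.mem_inter_iff, Set.mem_preimage, mem_filter, exists_prop, E]
    constructor
    · exact fun ⟨hc, h⟩ => ⟨j₀, ⟨hj₀, hc⟩, hω, h⟩
    · rintro ⟨j₁, ⟨hj₁, hc⟩, hω₁, h⟩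
      obtain rfl : j₁ = j₀ := hdisj.elim hj₁ hj₀ (Set.not_disjoint_iff.2 ⟨_, hω₁, hω⟩)
      exact ⟨hc, h⟩
  rw [hdecomp, measure_biUnion_finset]
  · refine sum_congr rfl fun j₀ _ => ?_
    change P (X i ⁻¹' S j₀ ∩ E _) = P (X i ⁻¹' S j₀) * P (E _)
    rw [hE]
    exact hindep.measure_inter_preimage_eq_mul {g | g ⟨i, mem_singleton_self i⟩ ∈ S j₀} _
      ((hS j₀).preimage (measurable_pi_apply _)) (measurableSet_countIn_eq hS univ _)
  · intro j₁ hj₁ j₂ hj₂ hne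
    exact ((hdisj (mem_filter.1 hj₁).1 (mem_filter.1 hj₂).1 hne).preimage (X i)).mono
      Set.inter_subset_left Set.inter_subset_left
  · intro j₀ _
    rw [hE]
    exact ((hS j₀).preimage (hX i)).inter
      (measurable_pi_lambda (fun ω (i' : s) => X i' ω) (fun i' => hX i')
        (measurableSet_countIn_eq hS univ _))

theorem measure_countIn_eq_multinomial [DecidableEq κ] (hX : ∀ i, Measurable (X i))
    (hXindep : iIndepFun X P) (hS : ∀ j, MeasurableSet (S j))
    (hdisj : (t : Set κ).PairwiseDisjoint S) (hcover : ∀ a, ∃ j ∈ t, a ∈ S j)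
    {p : κ → ℝ≥0∞} (hp : ∀ i, ∀ j ∈ t, P (X i ⁻¹' S j) = p j) (s : Finset ι) (c : κ → ℕ) :
    P {ω | ∀ j ∈ t, countIn s (S j) (X · ω) = c j}
      = if ∑ j ∈ t, c j = #s then Nat.multinomial t c * ∏ j ∈ t, p j ^ c j else 0 := by
  have := hXindep.isProbabilityMeasure
  induction s using Finset.cons_induction generalizing c with
  | empty =>
    simp only [countIn_empty, card_empty, sum_eq_zero_iff]
    by_cases hc : ∀ j ∈ t, c j = 0
    · have huniv : {ω : Ω | ∀ j ∈ t, 0 = c j} = Set.univ :=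
        Set.eq_univ_of_forall fun _ j hj => (hc j hj).symm
      have hmult : Nat.multinomial t c = 1 := by
        rw [Nat.multinomial_congr (g := 0) hc]; simp [Nat.multinomial]
      rw [if_pos hc, huniv, measure_univ, hmult, prod_eq_one fun j hj => by rw [hc j hj, pow_zero]]
      simp
    · have hempty : {ω : Ω | ∀ j ∈ t, 0 = c j} = ∅ :=
        Set.eq_empty_of_forall_notMem fun _ h => hc fun j hj => (h j hj).symm
      rw [if_neg hc, hempty, measure_empty]
  | cons i s hi ih =>
    rw [measure_countIn_cons_eq_sum hX hXindep hS hdisj hcover hi, card_cons]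
    have hterm : ∀ j₀ ∈ {j ∈ t | c j ≠ 0}, P (X i ⁻¹' S j₀)
        * P {ω | ∀ j ∈ t, countIn s (S j) (X · ω) = update c j₀ (c j₀ - 1) j}
        = if ∑ j ∈ t, c j = #s + 1 then
            Nat.multinomial t (update c j₀ (c j₀ - 1)) * ∏ j ∈ t, p j ^ c j else 0 := by
      intro j₀ hj₀
      obtain ⟨hj₀, hc⟩ := mem_filter.1 hj₀
      have hsum := sum_update_pred_add_one hj₀ hc
      rw [ih, hp i j₀ hj₀, ← mul_prod_pow_update_pred p hj₀ hc]
      split_ifs <;> first | (exfalso; omega) | ring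
    rw [sum_congr rfl hterm, sum_ite_irrel]
    split_ifs with hsum
    · rw [← sum_mul, Nat.multinomial_eq_sum_multinomial_update_pred (by omega), Nat.cast_sum]
    · rw [sum_const_zero]

theorem measure_countIn_eq_choose_mul_multinomial [DecidableEq κ] (hX : ∀ i, Measurable (X i))
    (hXindep : iIndepFun X P) (hS : ∀ j, MeasurableSet (S j)) {j₀ : κ} (hj₀ : j₀ ∉ t)
    (hdisj : (cons j₀ t hj₀ : Set κ).PairwiseDisjoint S)
    (hcover : ∀ a, ∃ j ∈ cons j₀ t hj₀, a ∈ S j) {p : κ → ℝ≥0∞}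
    (hp : ∀ i, ∀ j ∈ cons j₀ t hj₀, P (X i ⁻¹' S j) = p j) (s : Finset ι) (c : κ → ℕ) :
    P {ω | ∀ j ∈ t, countIn s (S j) (X · ω) = c j}
      = if ∑ j ∈ t, c j ≤ #s then
          (#s).choose (∑ j ∈ t, c j) * Nat.multinomial t c * p j₀ ^ (#s - ∑ j ∈ t, c j)
            * ∏ j ∈ t, p j ^ c j
        else 0 := by
  set c' := update c j₀ (#s - ∑ j ∈ t, c j)
  have hagree : ∀ j ∈ t, c' j = c j := fun j hj => update_of_ne (ne_of_mem_of_not_mem hj hj₀) _ _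
  have hcount : ∀ ω, countIn s (S j₀) (X · ω) + ∑ j ∈ t, countIn s (S j) (X · ω) = #s := fun ω => by
    rw [← sum_cons hj₀ (f := fun j => countIn s (S j) (X · ω)), sum_countIn_eq_card hdisj hcover]
  have hevent : {ω | ∀ j ∈ t, countIn s (S j) (X · ω) = c j}
      = {ω | ∀ j ∈ cons j₀ t hj₀, countIn s (S j) (X · ω) = c' j} := by
    ext ω
    simp only [Set.mem_ofPred_eq, forall_mem_cons, update_self, c']
    refine ⟨fun h => ⟨?_, fun j hj => (h j hj).trans (hagree j hj).symm⟩,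
      fun h j hj => (h.2 j hj).trans (hagree j hj)⟩
    rw [← sum_congr rfl h, ← hcount ω, Nat.add_sub_cancel]
  rw [hevent, measure_countIn_eq_multinomial hX hXindep hS hdisj hcover hp, sum_cons,
    Nat.multinomial_cons, prod_cons, sum_congr rfl hagree, Nat.multinomial_congr hagree,
    prod_congr rfl fun j hj => by rw [hagree j hj],
    show c' j₀ = #s - ∑ j ∈ t, c j from update_self ..]
  by_cases hle : ∑ j ∈ t, c j ≤ #s
  · rw [if_pos (Nat.sub_add_cancel hle), if_pos hle, Nat.sub_add_cancel hle,
      Nat.choose_symm hle]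
    push_cast
    ring
  · refine (if_neg fun h => hle ?_).trans (if_neg hle).symm
    rw [← h]
    exact Nat.le_add_left _ _

end MultinomialLaw

theorem measure_setOf_mem_index_eq_tsum {Ω β : Type*} [MeasurableSpace Ω] [MeasurableSpace β]
    {P : Measure Ω} {N : Ω → ℕ} {Y : Ω → β} (hN : Measurable N) (hY : Measurable Y)
    (hNY : IndepFun N Y P) {T : ℕ → Set β} (hT : ∀ m, MeasurableSet (T m)) :
    P {ω | Y ω ∈ T (N ω)} = ∑' m, P {ω | N ω = m} * P (Y ⁻¹' T m) := by
  have hunion : {ω | Y ω ∈ T (N ω)} = ⋃ m, N ⁻¹' {m} ∩ Y ⁻¹' T m := by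
    ext ω; simp
  rw [hunion, measure_iUnion]
  · exact tsum_congr fun m =>
      hNY.measure_inter_preimage_eq_mul _ _ (measurableSet_singleton m) (hT m)
  · intro m m' hne
    exact ((Set.disjoint_singleton.2 hne).preimage N).mono Set.inter_subset_left
      Set.inter_subset_left
  · exact fun m => (hN (measurableSet_singleton m)).inter (hY (hT m))

theorem prod_measure_pow_eq_ofReal {β κ : Type*} [MeasurableSpace β] (μ : Measure β)
    [IsFiniteMeasure μ] (t : Finset κ) (A : κ → Set β) (k : κ → ℕ) :
    ∏ j ∈ t, μ (A j) ^ k j = ENNReal.ofReal (∏ j ∈ t, μ.real (A j) ^ k j) := by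
  rw [ENNReal.ofReal_prod_of_nonneg fun j _ => by positivity]
  exact prod_congr rfl fun j _ => by rw [ENNReal.ofReal_pow measureReal_nonneg, ofReal_measureReal]

theorem tsum_geometric_mul_choose_mul_pow {q r : ℝ} (hq : q ∈ Set.Ioo 0 1) (hr : r ∈ Set.Icc 0 1)
    {K : ℕ} (hK : 1 ≤ K) :
    ∑' m, (if K ≤ m then
        ENNReal.ofReal (q * (1 - q) ^ (m - 1)) * m.choose K * ENNReal.ofReal r ^ (m - K) else 0)
      = ENNReal.ofReal (q * (1 - q) ^ (K - 1) / (1 - (1 - q) * r) ^ (K + 1)) := by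
  obtain ⟨hq0, hq1⟩ := hq
  obtain ⟨hr0, hr1⟩ := hr
  have hρ0 : 0 ≤ (1 - q) * r := mul_nonneg (by linarith) hr0
  have hρ : ‖(1 - q) * r‖ < 1 := by
    rw [Real.norm_of_nonneg hρ0]; nlinarith
  have hterm : ∀ d, (if K ≤ d + K then
        ENNReal.ofReal (q * (1 - q) ^ (d + K - 1)) * (d + K).choose K
          * ENNReal.ofReal r ^ (d + K - K) else 0)
      = ENNReal.ofReal (q * (1 - q) ^ (K - 1) * ((d + K).choose K * ((1 - q) * r) ^ d)) := by
    intro d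
    rw [if_pos (Nat.le_add_left K d), Nat.add_sub_cancel, ← ENNReal.ofReal_natCast,
      ← ENNReal.ofReal_pow hr0, ← ENNReal.ofReal_mul (by positivity),
      ← ENNReal.ofReal_mul (by positivity), show d + K - 1 = (K - 1) + d by omega]
    congr 1
    rw [pow_add, mul_pow]
    ring
  rw [← ENNReal.summable.sum_add_tsum_nat_add' (k := K),
    sum_eq_zero fun m hm => if_neg (not_le.2 (mem_range.1 hm)), zero_add, tsum_congr hterm,
    ← ENNReal.ofReal_tsum_of_nonneg (fun d => by positivity)
      ((summable_choose_mul_geometric_of_norm_lt_one K hρ).mul_left _),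
    tsum_mul_left, tsum_choose_mul_geometric_of_norm_lt_one K hρ, mul_one_div]

section LevelSets

variable (x : ℕ → ℝ) (n : ℕ)

/-- Level `0` is `(-∞, x n)`, so that the levels `0, …, n` partition `ℝ`. -/
def levelSet : ℕ → Set ℝ
  | 0 => Set.Iio (x n)
  | 1 => Set.Ici (x 1)
  | j + 2 => Set.Ico (x (j + 2)) (x (j + 1))

theorem measurableSet_levelSet : ∀ j, MeasurableSet (levelSet x n j)
  | 0 => measurableSet_Iio
  | 1 => measurableSet_Ici
  | _ + 2 => measurableSet_Ico

variable {x n}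

theorem levelSet_subset_Ici : ∀ {j}, 1 ≤ j → levelSet x n j ⊆ Set.Ici (x j)
  | 1, _ => subset_rfl
  | _ + 2, _ => Set.Ico_subset_Ici_self

theorem levelSet_subset_Iio : ∀ {j}, 2 ≤ j → levelSet x n j ⊆ Set.Iio (x (j - 1))
  | _ + 2, _ => Set.Ico_subset_Iio_self

theorem pairwiseDisjoint_levelSet (hx : AntitoneOn x (Set.Icc 1 n)) :
    (Icc 0 n : Set ℕ).PairwiseDisjoint (levelSet x n) := by
  have hlt : ∀ j ∈ Icc 0 n, ∀ j' ∈ Icc 0 n, j < j' →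
      Disjoint (levelSet x n j) (levelSet x n j') := by
    intro j hj j' hj' hjj'
    simp only [mem_Icc] at hj hj'
    rcases Nat.eq_zero_or_pos j with rfl | hj1
    · exact (Set.Iio_disjoint_Ici (hx ⟨by omega, hj'.2⟩ ⟨by omega, le_rfl⟩ hj'.2)).mono_right
        (levelSet_subset_Ici (by omega))
    · exact (Set.Iio_disjoint_Ici (hx ⟨hj1, by omega⟩ ⟨by omega, by omega⟩
        (by omega : j ≤ j' - 1))).symm.mono (levelSet_subset_Ici hj1)
        (levelSet_subset_Iio (by omega))
  intro j hj j' hj' hne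
  rcases hne.lt_or_gt with h | h
  · exact hlt j hj j' hj' h
  · exact (hlt j' hj' j hj h).symm

theorem exists_mem_levelSet (hn : 1 ≤ n) (r : ℝ) : ∃ j ∈ Icc 0 n, r ∈ levelSet x n j := by
  by_cases hr : r < x n
  · exact ⟨0, mem_Icc.2 ⟨le_rfl, Nat.zero_le n⟩, hr⟩
  have hxn : x (n - 1 + 1) ≤ r := by rw [Nat.sub_add_cancel hn]; exact not_lt.1 hr
  have hex : ∃ j, x (j + 1) ≤ r := ⟨n - 1, hxn⟩
  have hle : Nat.find hex ≤ n - 1 := Nat.find_min' hex hxn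
  have hspec : x (Nat.find hex + 1) ≤ r := Nat.find_spec hex
  have hmin : ∀ j < Nat.find hex, r < x (j + 1) := fun j hj => not_le.1 (Nat.find_min hex hj)
  refine ⟨Nat.find hex + 1, mem_Icc.2 ⟨Nat.zero_le _, by omega⟩, ?_⟩
  rcases h : Nat.find hex with _ | j <;> rw [h] at hspec hmin
  · exact hspec
  · exact ⟨hspec, hmin j j.lt_succ_self⟩

theorem countIn_levelSet_one {ι : Type*} (s : Finset ι) (f : ι → ℝ) :
    countIn s (levelSet x n 1) f = #{i ∈ s | x 1 ≤ f i} :=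
  congrArg card (filter_congr fun _ _ => Iff.rfl)

theorem countIn_levelSet_of_two_le {ι : Type*} {j : ℕ} (hj : 2 ≤ j) (s : Finset ι)
    (f : ι → ℝ) : countIn s (levelSet x n j) f = #{i ∈ s | x j ≤ f i ∧ f i < x (j - 1)} := by
  obtain ⟨j, rfl⟩ : ∃ j', j = j' + 2 := ⟨j - 2, by omega⟩
  exact congrArg card (filter_congr fun _ _ => Iff.rfl)

theorem levelCounts_iff {ι : Type*} (hn : 1 ≤ n) (s : Finset ι) (f : ι → ℝ) (k : ℕ → ℕ) :
    (#{i ∈ s | x 1 ≤ f i} = k 1 ∧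
        ∀ j, 2 ≤ j → j ≤ n → #{i ∈ s | x j ≤ f i ∧ f i < x (j - 1)} = k j) ↔
      ∀ j ∈ Icc 1 n, countIn s (levelSet x n j) f = k j := by
  constructor
  · rintro ⟨h1, h⟩ j hj
    obtain ⟨hj1, hjn⟩ := mem_Icc.1 hj
    rcases hj1.eq_or_lt with rfl | hj2
    · rwa [countIn_levelSet_one]
    · rw [countIn_levelSet_of_two_le hj2]
      exact h j hj2 hjn
  · intro h
    refine ⟨(countIn_levelSet_one s f).symm.trans (h 1 (mem_Icc.2 ⟨le_rfl, hn⟩)),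
      fun j hj2 hjn => ?_⟩
    rw [← countIn_levelSet_of_two_le hj2]
    exact h j (mem_Icc.2 ⟨by omega, hjn⟩)

section Law

variable {Ω : Type*} [MeasurableSpace Ω] {P : Measure Ω} {μ : Measure ℝ}

theorem measure_countIn_levelSet_eq {ι : Type*} {X : ι → Ω → ℝ} (hX : ∀ i, Measurable (X i))
    (hXindep : iIndepFun X P) (hXlaw : ∀ i, P.map (X i) = μ) (hx : AntitoneOn x (Set.Icc 1 n))
    (hn : 1 ≤ n) (s : Finset ι) (k : ℕ → ℕ) :
    P {ω | ∀ j ∈ Icc 1 n, countIn s (levelSet x n j) (X · ω) = k j}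
      = if ∑ j ∈ Icc 1 n, k j ≤ #s then
          (#s).choose (∑ j ∈ Icc 1 n, k j) * Nat.multinomial (Icc 1 n) k
            * μ (levelSet x n 0) ^ (#s - ∑ j ∈ Icc 1 n, k j)
            * ∏ j ∈ Icc 1 n, μ (levelSet x n j) ^ k j
        else 0 := by
  have h0 : 0 ∉ Icc 1 n := by simp
  have hIcc : cons 0 (Icc 1 n) h0 = Icc 0 n := by ext; simp; omega
  refine measure_countIn_eq_choose_mul_multinomial hX hXindep (measurableSet_levelSet x n) h0
    (p := fun j => μ (levelSet x n j)) ?_ ?_ ?_ s k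
  · rw [hIcc]; exact pairwiseDisjoint_levelSet hx
  · rw [hIcc]; exact exists_mem_levelSet hn
  · intro i j _
    rw [← hXlaw i, Measure.map_apply (hX i) (measurableSet_levelSet x n j)]

theorem measure_levelCounts_eq_tsum {N : Ω → ℕ} {X : ℕ → Ω → ℝ} (hN : Measurable N)
    (hX : ∀ i, Measurable (X i)) (hXindep : iIndepFun X P) (hXlaw : ∀ i, P.map (X i) = μ)
    (hNX : IndepFun N (fun ω i => X i ω) P) (hx : AntitoneOn x (Set.Icc 1 n)) (hn : 1 ≤ n)
    (k : ℕ → ℕ) :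
    P {ω | #{i ∈ Icc 1 (N ω) | x 1 ≤ X i ω} = k 1 ∧
        ∀ j, 2 ≤ j → j ≤ n → #{i ∈ Icc 1 (N ω) | x j ≤ X i ω ∧ X i ω < x (j - 1)} = k j}
      = ∑' m, P {ω | N ω = m} * if ∑ j ∈ Icc 1 n, k j ≤ m then
          m.choose (∑ j ∈ Icc 1 n, k j) * Nat.multinomial (Icc 1 n) k
            * μ (levelSet x n 0) ^ (m - ∑ j ∈ Icc 1 n, k j)
            * ∏ j ∈ Icc 1 n, μ (levelSet x n j) ^ k j
        else 0 := by
  have hevent : {ω | #{i ∈ Icc 1 (N ω) | x 1 ≤ X i ω} = k 1 ∧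
      ∀ j, 2 ≤ j → j ≤ n → #{i ∈ Icc 1 (N ω) | x j ≤ X i ω ∧ X i ω < x (j - 1)} = k j}
      = {ω | (X · ω) ∈ {g | ∀ j ∈ Icc 1 n, countIn (Icc 1 (N ω)) (levelSet x n j) g = k j}} :=
    Set.ext fun ω => levelCounts_iff hn _ _ k
  rw [hevent, measure_setOf_mem_index_eq_tsum hN (measurable_pi_lambda _ hX) hNX
    fun m => measurableSet_countIn_eq (measurableSet_levelSet x n) (Icc 1 m) k]
  refine tsum_congr fun m => congrArg _ ?_
  have h := measure_countIn_levelSet_eq hX hXindep hXlaw hx hn (Icc 1 m) k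
  rwa [Nat.card_Icc, Nat.add_sub_cancel] at h

end Law

variable (μ : Measure ℝ) [IsProbabilityMeasure μ]

theorem measureReal_levelSet_zero :
    μ.real (levelSet x n 0) = 1 - μ.real (Set.Ici (x n)) := by
  rw [levelSet, ← Set.compl_Ici, measureReal_compl measurableSet_Ici, probReal_univ]

theorem measureReal_levelSet_of_two_le (hx : AntitoneOn x (Set.Icc 1 n)) {j : ℕ} (hj : 2 ≤ j)
    (hjn : j ≤ n) :
    μ.real (levelSet x n j) = μ.real (Set.Ici (x j)) - μ.real (Set.Ici (x (j - 1))) := by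
  obtain ⟨j, rfl⟩ : ∃ j', j = j' + 2 := ⟨j - 2, by omega⟩
  rw [levelSet, show j + 2 - 1 = j + 1 by omega, ← Set.Ici_sdiff_Ici,
    measureReal_sdiff (Set.Ici_subset_Ici.2 (hx ⟨by omega, by omega⟩ ⟨by omega, hjn⟩ (by omega)))
      measurableSet_Ici]

theorem prod_measureReal_levelSet_pow (hx : AntitoneOn x (Set.Icc 1 n)) (hn : 1 ≤ n)
    (k : ℕ → ℕ) :
    ∏ j ∈ Icc 1 n, μ.real (levelSet x n j) ^ k j
      = μ.real (Set.Ici (x 1)) ^ k 1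
          * ∏ j ∈ Icc 2 n, (μ.real (Set.Ici (x j)) - μ.real (Set.Ici (x (j - 1)))) ^ k j := by
  rw [Icc_eq_cons_Ioc hn, prod_cons, ← Icc_add_one_left_eq_Ioc]
  exact congrArg _ (prod_congr rfl fun j hj => by
    rw [measureReal_levelSet_of_two_le μ hx (mem_Icc.1 hj).1 (mem_Icc.1 hj).2])

end LevelSets

/-- Extreme-value computation from the proof of Theorem 4.3: joint law of the numbers of
maxima among a geometric number `N` of i.i.d. variables falling in the successive level
sets `[x_j, x_{j−1})`. -/
theorem stmt_18 {Ω : Type*} [MeasurableSpace Ω] (P : Measure Ω) [IsProbabilityMeasure P]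
    (q : ℝ) (hq : q ∈ Set.Ioo (0:ℝ) 1)
    (N : Ω → ℕ) (hN : Measurable N)
    (hNgeom : ∀ m : ℕ, 1 ≤ m → P {ω | N ω = m} = ENNReal.ofReal (q * (1 - q) ^ (m - 1)))
    (X : ℕ → Ω → ℝ) (hX : ∀ i, Measurable (X i))
    (hXindep : iIndepFun X P)
    (hXident : ∀ i, IdentDistrib (X i) (X 1) P P)
    (hNXindep : IndepFun N (fun ω i => X i ω) P)
    (n : ℕ) (hn : 1 ≤ n) (x : ℕ → ℝ)
    (hx : ∀ i j : ℕ, 1 ≤ i → i < j → j ≤ n → x j < x i)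
    (k : ℕ → ℕ) (K : ℕ) (hK : K = ∑ j ∈ Finset.Icc 1 n, k j) (hK1 : 1 ≤ K)
    (F : ℕ → ℝ) (hF : ∀ j, F j = (P {ω | x j ≤ X 1 ω}).toReal) :
    P {ω | ((Finset.Icc 1 (N ω)).filter (fun i => x 1 ≤ X i ω)).card = k 1 ∧
        ∀ j : ℕ, 2 ≤ j → j ≤ n →
          ((Finset.Icc 1 (N ω)).filter
            (fun i => x j ≤ X i ω ∧ X i ω < x (j - 1))).card = k j}
      = ENNReal.ofReal ((q * (1 - q) ^ (K - 1) / (q + F n * (1 - q)) ^ (K + 1))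
          * ((Nat.factorial K : ℝ) / ∏ j ∈ Finset.Icc 1 n, (Nat.factorial (k j) : ℝ))
          * (F 1) ^ (k 1) * ∏ j ∈ Finset.Icc 2 n, (F j - F (j - 1)) ^ (k j)) := by
  have hanti : AntitoneOn x (Set.Icc 1 n) := fun i hi j hj hij =>
    hij.eq_or_lt.elim (fun h => h ▸ le_rfl) fun h => (hx i j hi.1 h hj.2).le
  set μ := P.map (X 1)
  have hμ : IsProbabilityMeasure μ := Measure.isProbabilityMeasure_map (hX 1).aemeasurable
  have hFμ : ∀ j, F j = μ.real (Set.Ici (x j)) := fun j => by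
    rw [hF, map_measureReal_apply (hX 1) measurableSet_Ici]; rfl
  rw [measure_levelCounts_eq_tsum hN hX hXindep (fun i => (hXident i).map_eq) hNXindep hanti hn k,
    ← hK]
  calc _ = (Nat.multinomial (Icc 1 n) k * ∏ j ∈ Icc 1 n, μ (levelSet x n j) ^ k j) * ∑' m,
          (if K ≤ m then ENNReal.ofReal (q * (1 - q) ^ (m - 1)) * m.choose K
            * ENNReal.ofReal (μ.real (levelSet x n 0)) ^ (m - K) else 0) := by
        rw [← ENNReal.tsum_mul_left]
        refine tsum_congr fun m => ?_
        split_ifs with hm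
        · rw [hNgeom m (hK1.trans hm), ofReal_measureReal]; ring
        · simp
    _ = _ := by
        rw [tsum_geometric_mul_choose_mul_pow hq ⟨measureReal_nonneg, measureReal_le_one⟩ hK1,
          prod_measure_pow_eq_ofReal, ← ENNReal.ofReal_natCast, Nat.cast_multinomial, ← hK,
          ← ENNReal.ofReal_mul (by positivity), ← ENNReal.ofReal_mul (by positivity)]
        congr 1
        rw [prod_measureReal_levelSet_pow μ hanti hn, measureReal_levelSet_zero]
        simp only [← hFμ]
        ring
end
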